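/- arXiv:1611.05372 — 2 statements merged into one kernel-verified Lean document; each statement's English description precedes it below -/
import Mathlib

section
/- (Existence of pure Nash equilibria in polymatroid games) Let N = {1,…,n} be a finite set of players and E a finite set of resources. For each player i let f_i : 2^E → ℕ be an integral polymatroid rank function, let d_i ∈ ℕ with d_i ≤ f_i(E), and for each resource e let C_{i,e} : ℕ×ℕ → ℝ≥0 be regular. For a strategy profile x = (x_1,…,x_n) with x_i ∈ B_{f_i}(d_i), define π_i(x) = Σ_{e∈E} C_{i,e}(x_{i,e}; Σ_{j≠i} x_{j,e}). Then there exists a strategy profile x with x_i ∈ B_{f_i}(d_i) for all i such that for every player i and every y_i ∈ B_{f_i}(d_i): π_i(x_1,…,x_i,…,x_n) ≤ π_i(x_1,…,y_i,…,x_n); that is, the game has a pure Nash equilibrium. -/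
open Finset

/-- Indicator vector of an element. -/
def chi {E : Type*} [DecidableEq E] (e : E) : E → ℕ := fun e' => if e' = e then 1 else 0

/-- Integral polymatroid rank function: normalized, monotone, submodular. -/
def IsPolymatroidRank {E : Type*} [Fintype E] [DecidableEq E] (f : Finset E → ℕ) : Prop :=
  f ∅ = 0 ∧ (∀ U V : Finset E, U ⊆ V → f U ≤ f V) ∧
    (∀ U V : Finset E, f (U ∪ V) + f (U ∩ V) ≤ f U + f V)

/-- The integral polymatroid base polytope `B_f(d)`. -/
def Base {E : Type*} [Fintype E] (f : Finset E → ℕ) (d : ℕ) : Set (E → ℕ) :=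
  {x | (∀ U : Finset E, ∑ e ∈ U, x e ≤ f U) ∧ ∑ e, x e = d}

/-- Regularity of a parametrized cost function: the left discrete derivative
`C⁻(x;t) = C(x;t) - C(x-1;t)` (for `x ≥ 1`) satisfies both
`C⁻(x;t) ≤ C⁻(x;t+1)` and `C⁻(x;t+1) ≤ C⁻(x+1;t)`. -/
def Regular (C : ℕ → ℕ → ℝ) : Prop :=
  ∀ x t : ℕ, 1 ≤ x →
    C x t - C (x - 1) t ≤ C x (t + 1) - C (x - 1) (t + 1) ∧
    C x (t + 1) - C (x - 1) (t + 1) ≤ C (x + 1) t - C x t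

/-- The objective `Σ_{e ∈ E} C_e(x_e; t_e)` of problem `P(t,d)`. -/
def totalCost {E : Type*} [Fintype E] (C : E → ℕ → ℕ → ℝ) (t : E → ℕ) (x : E → ℕ) : ℝ :=
  ∑ e, C e (x e) (t e)

/-- An optimal solution of `P(t,d)`: minimize `Σ_e C_e(x_e;t_e)` over `B_f(d)`. -/
def IsOptimal {E : Type*} [Fintype E] (f : Finset E → ℕ) (C : E → ℕ → ℕ → ℝ)
    (t : E → ℕ) (d : ℕ) (x : E → ℕ) : Prop :=
  x ∈ Base f d ∧ ∀ y ∈ Base f d, totalCost C t x ≤ totalCost C t y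

/-- The `L1`-distance `‖u - v‖ = Σ_e |u_e - v_e|` of two vectors in `ℕ^E`. -/
def l1 {E : Type*} [Fintype E] (u v : E → ℕ) : ℕ :=
  ∑ e, ((u e : ℤ) - (v e : ℤ)).natAbs

set_option linter.unusedSectionVars false

namespace PG

variable {E : Type*} [Fintype E] [DecidableEq E]

/-- `mv x a b = x - χ_a + χ_b` (with truncated subtraction). -/
def mv (x : E → ℕ) (a b : E) : E → ℕ :=
  fun e => (x e + (if e = b then 1 else 0)) - (if e = a then 1 else 0)

lemma chi_apply (b e : E) : chi b e = if e = b then 1 else 0 := rfl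

lemma add_chi_apply (x : E → ℕ) (b e : E) : (x + chi b) e = x e + if e = b then 1 else 0 := rfl

lemma add_chi_self (x : E → ℕ) (b : E) : (x + chi b) b = x b + 1 := by simp [add_chi_apply, chi]

lemma add_chi_ne (x : E → ℕ) {b e : E} (h : e ≠ b) : (x + chi b) e = x e := by
  simp [add_chi_apply, chi, h]

lemma sum_ite_mem (U : Finset E) (b : E) :
    (∑ e ∈ U, if e = b then (1:ℕ) else 0) = if b ∈ U then 1 else 0 := by
  simp [Finset.sum_ite_eq' U b (fun _ => (1:ℕ))]

lemma sum_add_chi (x : E → ℕ) (b : E) (U : Finset E) :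
    ∑ e ∈ U, (x + chi b) e = (∑ e ∈ U, x e) + if b ∈ U then 1 else 0 := by
  simp only [add_chi_apply, Finset.sum_add_distrib, sum_ite_mem]

lemma mv_apply_fst (x : E → ℕ) {a b : E} (hab : a ≠ b) : mv x a b a = x a - 1 := by
  simp [mv, hab]

lemma mv_apply_snd (x : E → ℕ) {a b : E} (hab : a ≠ b) : mv x a b b = x b + 1 := by
  simp [mv, hab.symm]

lemma mv_apply_other (x : E → ℕ) {a b e : E} (ha : e ≠ a) (hb : e ≠ b) : mv x a b e = x e := by
  simp [mv, ha, hb]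

lemma mv_point (x : E → ℕ) {a b : E} (hab : a ≠ b) (hxa : 1 ≤ x a) (e : E) :
    mv x a b e + (if e = a then 1 else 0) = x e + (if e = b then 1 else 0) := by
  by_cases h1 : e = a
  · subst h1
    simp [mv, hab]
    omega
  · simp only [mv, if_neg h1]
    omega

lemma sum_mv (x : E → ℕ) {a b : E} (hab : a ≠ b) (hxa : 1 ≤ x a) (U : Finset E) :
    (∑ e ∈ U, mv x a b e) + (if a ∈ U then 1 else 0)
      = (∑ e ∈ U, x e) + (if b ∈ U then 1 else 0) := by
  have h := Finset.sum_congr rfl (fun e (_ : e ∈ U) => mv_point x hab hxa e)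
  calc (∑ e ∈ U, mv x a b e) + (if a ∈ U then 1 else 0)
      = ∑ e ∈ U, (mv x a b e + if e = a then 1 else 0) := by
        rw [Finset.sum_add_distrib, sum_ite_mem]
    _ = ∑ e ∈ U, (x e + if e = b then 1 else 0) := h
    _ = _ := by rw [Finset.sum_add_distrib, sum_ite_mem]

lemma mv_le (x : E → ℕ) (a b : E) (e : E) : mv x a b e ≤ (x + chi b) e := by
  simp only [mv, add_chi_apply]; omega

/-- membership in Base by domination (upper constraints) -/
lemma mem_base_of_le {f : Finset E → ℕ} {d : ℕ} {x y : E → ℕ}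
    (hle : ∀ e, y e ≤ x e) (hx : ∀ U : Finset E, ∑ e ∈ U, x e ≤ f U)
    (hsum : ∑ e, y e = d) : y ∈ Base f d :=
  ⟨fun U => le_trans (Finset.sum_le_sum fun e _ => hle e) (hx U), hsum⟩

lemma base_sum_le {f : Finset E → ℕ} {d : ℕ} {x : E → ℕ} (hx : x ∈ Base f d) (U : Finset E) :
    ∑ e ∈ U, x e ≤ f U := hx.1 U

lemma base_sum_eq {f : Finset E → ℕ} {d : ℕ} {x : E → ℕ} (hx : x ∈ Base f d) :
    ∑ e, x e = d := hx.2

lemma base_coord_le {f : Finset E → ℕ} {d : ℕ} {x : E → ℕ} (hx : x ∈ Base f d) (e : E) :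
    x e ≤ f {e} := by
  have := hx.1 {e}; simpa using this

lemma base_coord_le_univ (hf : IsPolymatroidRank (f := f)) {d : ℕ} {x : E → ℕ}
    (hx : x ∈ Base f d) (e : E) : x e ≤ f univ :=
  le_trans (base_coord_le hx e) (hf.2.1 _ _ (Finset.subset_univ _))

variable {f : Finset E → ℕ}

/-- tight sets are closed under union and intersection -/
lemma tight_union_inter (hf : IsPolymatroidRank f) {x : E → ℕ}
    (hx : ∀ U : Finset E, ∑ e ∈ U, x e ≤ f U) {U V : Finset E}
    (hU : ∑ e ∈ U, x e = f U) (hV : ∑ e ∈ V, x e = f V) :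
    (∑ e ∈ U ∪ V, x e = f (U ∪ V)) ∧ (∑ e ∈ U ∩ V, x e = f (U ∩ V)) := by
  have hsum : (∑ e ∈ U ∪ V, x e) + ∑ e ∈ U ∩ V, x e = (∑ e ∈ U, x e) + ∑ e ∈ V, x e :=
    Finset.sum_union_inter
  have h1 := hx (U ∪ V)
  have h2 := hx (U ∩ V)
  have h3 := hf.2.2 U V
  constructor <;> omega

/-- if `x + χ_b` violates no constraint, it is in `Base f (d+1)` -/
lemma add_chi_mem {d : ℕ} {x : E → ℕ} (hx : x ∈ Base f d) {b : E}
    (h : ∀ U : Finset E, b ∈ U → ∑ e ∈ U, x e < f U) : (x + chi b) ∈ Base f (d + 1) := by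
  constructor
  · intro U
    rw [sum_add_chi]
    by_cases hb : b ∈ U
    · simpa [hb] using h U hb
    · simpa [hb] using hx.1 U
  · rw [sum_add_chi, if_pos (mem_univ b), hx.2]

/-- if `mv x a b` violates no constraint then it is in `Base f d`. -/
lemma mv_mem {d : ℕ} {x : E → ℕ} (hx : x ∈ Base f d) {a b : E} (hab : a ≠ b) (hxa : 1 ≤ x a)
    (h : ∀ U : Finset E, b ∈ U → a ∉ U → ∑ e ∈ U, x e < f U) : mv x a b ∈ Base f d := by
  constructor
  · intro U
    have hs := sum_mv x hab hxa U
    by_cases hbU : b ∈ U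
    · by_cases haU : a ∈ U
      · have := hx.1 U; simp [hbU, haU] at hs; omega
      · have := h U hbU haU; simp [hbU, haU] at hs; omega
    · have := hx.1 U
      by_cases haU : a ∈ U <;> simp [hbU, haU] at hs <;> omega
  · have hs := sum_mv x hab hxa univ
    have := hx.2
    simp at hs
    omega

/-- union of a family of tight sets avoiding `e` is tight and avoids `e`. -/
lemma sup_tight (hf : IsPolymatroidRank f) {x : E → ℕ}
    (hx : ∀ U : Finset E, ∑ e ∈ U, x e ≤ f U) (S : Finset E) (g : E → Finset E) {e0 : E}
    (hg : ∀ a ∈ S, (∑ e ∈ g a, x e = f (g a)) ∧ e0 ∉ g a) :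
    (∑ e ∈ S.sup g, x e = f (S.sup g)) ∧ e0 ∉ S.sup g := by
  induction S using Finset.induction_on with
  | empty => simpa using hf.1.symm
  | @insert a S ha ih =>
      have hga := hg a (mem_insert_self a S)
      have ihS := ih (fun b hb => hg b (mem_insert_of_mem hb))
      rw [Finset.sup_insert]
      constructor
      · exact (tight_union_inter hf hx hga.1 ihS.1).1
      · intro hmem
        rcases Finset.mem_union.mp hmem with h | h
        · exact hga.2 h
        · exact ihS.2 h

/-- intersection of a nonempty family of tight sets containing `e` is tight and contains `e`. -/
lemma inf_tight (hf : IsPolymatroidRank f) {x : E → ℕ}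
    (hx : ∀ U : Finset E, ∑ e ∈ U, x e ≤ f U) (S : Finset (Finset E)) (hS : S.Nonempty) {e0 : E}
    (hg : ∀ U ∈ S, (∑ e ∈ U, x e = f U) ∧ e0 ∈ U) :
    (∑ e ∈ S.inf id, x e = f (S.inf id)) ∧ e0 ∈ S.inf id := by
  induction hS using Finset.Nonempty.cons_induction with
  | singleton U => simpa using hg U (by simp)
  | cons U S hUS hS ih =>
      have hU := hg U (mem_cons_self U S)
      have ihS := ih (fun V hV => hg V (Finset.mem_cons.mpr (Or.inr hV)))
      rw [Finset.inf_cons]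
      constructor
      · exact (tight_union_inter hf hx hU.1 ihS.1).2
      · exact Finset.mem_inter.mpr ⟨hU.2, ihS.2⟩

/-- **Simultaneous exchange lemma** for integral base polytopes. -/
lemma exchange (hf : IsPolymatroidRank f) {d : ℕ} {x y : E → ℕ}
    (hx : x ∈ Base f d) (hy : y ∈ Base f d) {e : E} (he : y e < x e) :
    ∃ b, x b < y b ∧ mv x e b ∈ Base f d ∧ mv y b e ∈ Base f d := by
  by_contra hcon
  push_neg at hcon
  -- every improving coordinate is blocked on the x side or on the y side
  have hblock : ∀ b, x b < y b →
      (∃ U : Finset E, b ∈ U ∧ e ∉ U ∧ ∑ e' ∈ U, x e' = f U) ∨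
      (∃ V : Finset E, e ∈ V ∧ b ∉ V ∧ ∑ e' ∈ V, y e' = f V) := by
    intro b hb
    have hbe : e ≠ b := by rintro rfl; omega
    by_cases hX : ∃ U : Finset E, b ∈ U ∧ e ∉ U ∧ ∑ e' ∈ U, x e' = f U
    · exact Or.inl hX
    · right
      push_neg at hX
      have hxmem : mv x e b ∈ Base f d := by
        refine mv_mem hx hbe (by omega) (fun U hbU heU => ?_)
        have := hx.1 U
        have := hX U hbU heU
        omega
      have hymem := hcon b hb hxmem
      by_contra hY
      push_neg at hY
      apply hymem
      refine mv_mem hy (Ne.symm hbe) (by omega) (fun V heV hbV => ?_)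
      have := hy.1 V
      have := hY V heV hbV
      omega
  classical
  -- choice of x-side blocking sets
  let g : E → Finset E := fun b =>
    if h : ∃ U : Finset E, b ∈ U ∧ e ∉ U ∧ ∑ e' ∈ U, x e' = f U then h.choose else ∅
  have hgspec : ∀ b, (∃ U : Finset E, b ∈ U ∧ e ∉ U ∧ ∑ e' ∈ U, x e' = f U) →
      b ∈ g b ∧ e ∉ g b ∧ ∑ e' ∈ g b, x e' = f (g b) := by
    intro b h
    simp only [g, dif_pos h]
    exact ⟨h.choose_spec.1, h.choose_spec.2.1, h.choose_spec.2.2⟩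
  by_cases hYe : ∃ V : Finset E, e ∈ V ∧ ∑ e' ∈ V, y e' = f V
  · -- minimal y-tight set containing e
    set S0 : Finset (Finset E) :=
      univ.filter (fun V : Finset E => e ∈ V ∧ ∑ e' ∈ V, y e' = f V) with hS0
    have hS0ne : S0.Nonempty := by
      obtain ⟨V, hV1, hV2⟩ := hYe
      exact ⟨V, by simp [hS0, hV1, hV2]⟩
    set A : Finset E := S0.inf id with hA
    have hAtight : (∑ e' ∈ A, y e' = f A) ∧ e ∈ A := by
      refine inf_tight hf hy.1 S0 hS0ne (fun V hV => ?_)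
      simp only [hS0, mem_filter] at hV
      exact ⟨hV.2.2, hV.2.1⟩
    have hAmin : ∀ V : Finset E, e ∈ V → (∑ e' ∈ V, y e' = f V) → A ⊆ V := by
      intro V h1 h2
      have hVS : V ∈ S0 := by simp [hS0, h1, h2]
      have : S0.inf id ≤ id V := Finset.inf_le hVS
      simpa [hA] using this
    -- on A, every improving coordinate is x-side blocked
    have hblockA : ∀ b ∈ A, x b < y b →
        b ∈ g b ∧ e ∉ g b ∧ ∑ e' ∈ g b, x e' = f (g b) := by
      intro b hbA hb
      rcases hblock b hb with h | ⟨V, h1, h2, h3⟩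
      · exact hgspec b h
      · exact absurd (hAmin V h1 h3 hbA) h2
    set S : Finset E := univ.filter (fun b => b ∈ A ∧ x b < y b) with hS
    set T : Finset E := S.sup g with hT
    have hTt : (∑ e' ∈ T, x e' = f T) ∧ e ∉ T := by
      refine sup_tight hf hx.1 S g (fun b hb => ?_)
      simp only [hS, mem_filter] at hb
      have := hblockA b hb.2.1 hb.2.2
      exact ⟨this.2.2, this.2.1⟩
    have hST : ∀ b ∈ S, b ∈ T := by
      intro b hb
      simp only [hS, mem_filter] at hb
      have := hblockA b hb.2.1 hb.2.2
      exact Finset.mem_sup.mpr ⟨b, by simp [hS, hb.2.1, hb.2.2], this.1⟩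
    -- uncrossing:  x(A \ T) ≤ y(A \ T)
    have key : ∑ e' ∈ A \ T, x e' ≤ ∑ e' ∈ A \ T, y e' := by
      have hxA : ∑ e' ∈ A, x e' = (∑ e' ∈ A ∩ T, x e') + ∑ e' ∈ A \ T, x e' := by
        rw [← Finset.sum_union (Finset.disjoint_sdiff_inter A T).symm]
        · congr 1
          rw [Finset.union_comm]
          exact (Finset.sdiff_union_inter A T).symm
      have hyA : ∑ e' ∈ A, y e' = (∑ e' ∈ A ∩ T, y e') + ∑ e' ∈ A \ T, y e' := by
        rw [← Finset.sum_union (Finset.disjoint_sdiff_inter A T).symm]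
        · congr 1
          rw [Finset.union_comm]
          exact (Finset.sdiff_union_inter A T).symm
      have hxU : ∑ e' ∈ A ∪ T, x e' = (∑ e' ∈ T, x e') + ∑ e' ∈ A \ T, x e' := by
        rw [← Finset.sum_union Finset.sdiff_disjoint.symm]
        congr 1
        rw [Finset.union_comm T (A \ T), Finset.sdiff_union_self_eq_union]
      have hsub := hf.2.2 A T
      have h1 : ∑ e' ∈ A ∪ T, x e' ≤ f (A ∪ T) := hx.1 _
      have h2 : ∑ e' ∈ A ∩ T, y e' ≤ f (A ∩ T) := hy.1 _
      have h3 : ∑ e' ∈ A, y e' = f A := hAtight.1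
      have h4 : ∑ e' ∈ T, x e' = f T := hTt.1
      omega
    -- but pointwise on A \ T, x ≥ y with strict at e : contradiction
    have hpt : ∀ b ∈ A \ T, y b ≤ x b := by
      intro b hb
      rcases Finset.mem_sdiff.mp hb with ⟨hbA, hbT⟩
      by_contra hlt
      push_neg at hlt
      exact hbT (hST b (by simp [hS, hbA, hlt]))
    have heAT : e ∈ A \ T := Finset.mem_sdiff.mpr ⟨hAtight.2, hTt.2⟩
    have : ∑ e' ∈ A \ T, y e' < ∑ e' ∈ A \ T, x e' :=
      Finset.sum_lt_sum hpt ⟨e, heAT, he⟩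
    omega
  · -- no y-tight set contains e : every improving coordinate is x-side blocked
    push_neg at hYe
    have hblockX : ∀ b, x b < y b →
        b ∈ g b ∧ e ∉ g b ∧ ∑ e' ∈ g b, x e' = f (g b) := by
      intro b hb
      rcases hblock b hb with h | ⟨V, h1, h2, h3⟩
      · exact hgspec b h
      · exact absurd h3 (by have := hYe V h1; omega)
    set S : Finset E := univ.filter (fun b => x b < y b) with hS
    set T : Finset E := S.sup g with hT
    have hTt : (∑ e' ∈ T, x e' = f T) ∧ e ∉ T := by
      refine sup_tight hf hx.1 S g (fun b hb => ?_)
      simp only [hS, mem_filter] at hb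
      have := hblockX b hb.2
      exact ⟨this.2.2, this.2.1⟩
    have hST : ∀ b, x b < y b → b ∈ T := by
      intro b hb
      exact Finset.mem_sup.mpr ⟨b, by simp [hS, hb], (hblockX b hb).1⟩
    have hsplit_x : (∑ e' ∈ T, x e') + ∑ e' ∈ Tᶜ, x e' = ∑ e', x e' :=
      Finset.sum_add_sum_compl T x
    have hsplit_y : (∑ e' ∈ T, y e') + ∑ e' ∈ Tᶜ, y e' = ∑ e', y e' :=
      Finset.sum_add_sum_compl T y
    have hyT : ∑ e' ∈ T, y e' ≤ f T := hy.1 T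
    have hpt : ∀ b ∈ Tᶜ, y b ≤ x b := by
      intro b hb
      rw [Finset.mem_compl] at hb
      by_contra hlt
      push_neg at hlt
      exact hb (hST b hlt)
    have heT : e ∈ Tᶜ := Finset.mem_compl.mpr hTt.2
    have : ∑ e' ∈ Tᶜ, y e' < ∑ e' ∈ Tᶜ, x e' := Finset.sum_lt_sum hpt ⟨e, heT, he⟩
    have hxd := hx.2
    have hyd := hy.2
    have hTx := hTt.1
    omega


/-! ### cost and regularity helpers -/

section Cost

variable (CC : E → ℕ → ℕ → ℝ)

lemma cost_add_chi (t u : E → ℕ) (b : E) :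
    totalCost CC t (u + chi b)
      = totalCost CC t u + (CC b (u b + 1) (t b) - CC b (u b) (t b)) := by
  unfold totalCost
  rw [← Finset.sum_erase_add univ _ (mem_univ b), ← Finset.sum_erase_add univ
    (fun e => CC e (u e) (t e)) (mem_univ b)]
  have h1 : ∀ e ∈ univ.erase b, CC e ((u + chi b) e) (t e) = CC e (u e) (t e) := by
    intro e he
    rw [add_chi_ne u (Finset.ne_of_mem_erase he)]
  rw [Finset.sum_congr rfl h1, add_chi_self]
  ring

lemma cost_mv (t x : E → ℕ) {a b : E} (hab : a ≠ b) (hxa : 1 ≤ x a) :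
    totalCost CC t (mv x a b)
      = totalCost CC t x - (CC a (x a) (t a) - CC a (x a - 1) (t a))
          + (CC b (x b + 1) (t b) - CC b (x b) (t b)) := by
  unfold totalCost
  have hbmem : b ∈ univ.erase a := Finset.mem_erase.mpr ⟨hab.symm, mem_univ b⟩
  rw [← Finset.sum_erase_add univ _ (mem_univ a), ← Finset.sum_erase_add (univ.erase a) _ hbmem]
  rw [← Finset.sum_erase_add univ (fun e => CC e (x e) (t e)) (mem_univ a),
    ← Finset.sum_erase_add (univ.erase a) (fun e => CC e (x e) (t e)) hbmem]
  have h1 : ∀ e ∈ (univ.erase a).erase b, CC e (mv x a b e) (t e) = CC e (x e) (t e) := by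
    intro e he
    rw [mv_apply_other x (Finset.ne_of_mem_erase (Finset.mem_of_mem_erase he))
      (Finset.ne_of_mem_erase he)]
  rw [Finset.sum_congr rfl h1, mv_apply_fst x hab, mv_apply_snd x hab]
  ring

lemma cost_bump (t x : E → ℕ) (r : E) :
    totalCost CC (t + chi r) x
      = totalCost CC t x + (CC r (x r) (t r + 1) - CC r (x r) (t r)) := by
  unfold totalCost
  rw [← Finset.sum_erase_add univ _ (mem_univ r), ← Finset.sum_erase_add univ
    (fun e => CC e (x e) (t e)) (mem_univ r)]
  have h1 : ∀ e ∈ univ.erase r, CC e (x e) ((t + chi r) e) = CC e (x e) (t e) := by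
    intro e he
    rw [add_chi_ne t (Finset.ne_of_mem_erase he)]
  rw [Finset.sum_congr rfl h1, add_chi_self]
  ring

end Cost

/-- `low t r = t - χ_r`. -/
def low (t : E → ℕ) (r : E) : E → ℕ := fun e => t e - if e = r then 1 else 0

lemma low_self (t : E → ℕ) (r : E) : low t r r = t r - 1 := by simp [low]

lemma low_ne (t : E → ℕ) {r e : E} (h : e ≠ r) : low t r e = t e := by simp [low, h]

lemma low_add_chi {t : E → ℕ} {r : E} (h : 1 ≤ t r) : low t r + chi r = t := by
  funext e
  by_cases he : e = r
  · subst he; simp only [add_chi_self, low_self]; omega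
  · rw [add_chi_ne _ he, low_ne _ he]

section Reg

variable {CC : ℕ → ℕ → ℝ}

lemma regx (hreg : Regular CC) {a b : ℕ} (t : ℕ) (hab : a ≤ b) :
    CC (a + 1) t - CC a t ≤ CC (b + 1) t - CC b t := by
  induction b, hab using Nat.le_induction with
  | base => exact le_rfl
  | succ b hb ih =>
      have h1 := (hreg (b + 1) t (by omega)).1
      have h2 := (hreg (b + 1) t (by omega)).2
      simp only [Nat.add_sub_cancel] at h1 h2
      linarith

lemma regt (hreg : Regular CC) {s t : ℕ} (a : ℕ) (hst : s ≤ t) :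
    CC (a + 1) s - CC a s ≤ CC (a + 1) t - CC a t := by
  induction t, hst using Nat.le_induction with
  | base => exact le_rfl
  | succ t ht ih =>
      have h1 := (hreg (a + 1) t (by omega)).1
      simp only [Nat.add_sub_cancel] at h1
      linarith

lemma regc (hreg : Regular CC) (a t : ℕ) :
    CC (a + 1) (t + 1) - CC a (t + 1) ≤ CC (a + 2) t - CC (a + 1) t := by
  have h2 := (hreg (a + 1) t (by omega)).2
  simp only [Nat.add_sub_cancel] at h2
  exact h2

lemma regd (hreg : Regular CC) {k k' : ℕ} (T : ℕ) (hkk : k ≤ k') :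
    CC k (T + 1) - CC k T ≤ CC k' (T + 1) - CC k' T := by
  induction k', hkk using Nat.le_induction with
  | base => exact le_rfl
  | succ k' hk ih =>
      have h1 := (hreg (k' + 1) T (by omega)).1
      simp only [Nat.add_sub_cancel] at h1
      linarith

end Reg


/-! ### l1 helpers -/

lemma l1_eq_zero {y w : E → ℕ} (h : l1 y w = 0) : y = w := by
  funext e
  have h2 := (Finset.sum_eq_zero_iff.mp h) e (mem_univ e)
  omega

lemma exists_coord_lt {y w : E → ℕ} (hne : y ≠ w) (hs : ∑ e, y e = ∑ e, w e) :
    ∃ a, w a < y a := by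
  by_contra h
  push_neg at h
  apply hne
  funext a
  by_contra ha
  have hlt : y a < w a := by have := h a; omega
  have : ∑ e, y e < ∑ e, w e :=
    Finset.sum_lt_sum (fun e _ => h e) ⟨a, mem_univ a, hlt⟩
  omega

lemma l1_mv {y w : E → ℕ} {a c : E} (hac : a ≠ c) (ha : w a < y a) (hc : y c < w c) :
    l1 (mv y a c) w + 2 = l1 y w := by
  unfold l1
  have hcmem : c ∈ univ.erase a := Finset.mem_erase.mpr ⟨(Ne.symm hac), mem_univ c⟩
  rw [← Finset.sum_erase_add univ _ (mem_univ a),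
    ← Finset.sum_erase_add (univ.erase a) _ hcmem,
    ← Finset.sum_erase_add univ (fun e => ((y e : ℤ) - (w e : ℤ)).natAbs) (mem_univ a),
    ← Finset.sum_erase_add (univ.erase a) (fun e => ((y e : ℤ) - (w e : ℤ)).natAbs) hcmem]
  have h1 : ∀ e ∈ (univ.erase a).erase c,
      ((mv y a c e : ℤ) - (w e : ℤ)).natAbs = ((y e : ℤ) - (w e : ℤ)).natAbs := by
    intro e he
    rw [mv_apply_other y (Finset.ne_of_mem_erase (Finset.mem_of_mem_erase he))
      (Finset.ne_of_mem_erase he)]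
  rw [Finset.sum_congr rfl h1, mv_apply_fst y hac, mv_apply_snd y hac]
  have hya : 1 ≤ y a := by omega
  have hcast : ((y a - 1 : ℕ) : ℤ) = (y a : ℤ) - 1 := by
    rw [Nat.cast_sub hya]; norm_num
  rw [hcast]
  push_cast
  omega

lemma mv_add_chi (u : E → ℕ) {r₀ β : E} (h : β ≠ r₀) :
    mv (u + chi r₀) r₀ β = u + chi β := by
  funext e
  by_cases h1 : e = r₀
  · subst h1
    rw [mv_apply_fst _ (Ne.symm h), add_chi_self, add_chi_ne u (Ne.symm h)]
    omega
  · by_cases h2 : e = β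
    · subst h2
      rw [mv_apply_snd _ (Ne.symm h), add_chi_ne u h1, add_chi_self]
    · rw [mv_apply_other _ h1 h2, add_chi_ne u h1, add_chi_ne u h2]

lemma ident {u y : E → ℕ} {r₀ : E} (h1 : ∀ c, c ≠ r₀ → (u + chi r₀) c ≤ y c)
    (h2 : y r₀ + 1 = (u + chi r₀) r₀) (hs : ∑ e, y e = ∑ e, (u + chi r₀) e) :
    ∃ β, β ≠ r₀ ∧ y = u + chi β := by
  set w := u + chi r₀ with hw
  have hsplit : (∑ e ∈ univ.erase r₀, y e) + y r₀ = ∑ e, y e :=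
    Finset.sum_erase_add univ y (mem_univ r₀)
  have hsplit2 : (∑ e ∈ univ.erase r₀, w e) + w r₀ = ∑ e, w e :=
    Finset.sum_erase_add univ w (mem_univ r₀)
  have hEr : ∑ e ∈ univ.erase r₀, y e = (∑ e ∈ univ.erase r₀, w e) + 1 := by omega
  have hβ : ∃ β ∈ univ.erase r₀, w β < y β := by
    by_contra h
    push_neg at h
    have : ∑ e ∈ univ.erase r₀, y e = ∑ e ∈ univ.erase r₀, w e := by
      apply Finset.sum_congr rfl
      intro e he
      have := h e he
      have := h1 e (Finset.ne_of_mem_erase he)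
      omega
    omega
  obtain ⟨β, hβmem, hβlt⟩ := hβ
  have hβr : β ≠ r₀ := Finset.ne_of_mem_erase hβmem
  have hrest : ∀ c ∈ (univ.erase r₀).erase β, y c = w c := by
    intro c hc
    have hcβ : c ≠ β := Finset.ne_of_mem_erase hc
    have hcr : c ≠ r₀ := Finset.ne_of_mem_erase (Finset.mem_of_mem_erase hc)
    by_contra hne
    have hclt : w c < y c := by have := h1 c hcr; omega
    have e1 : (∑ e ∈ (univ.erase r₀).erase β, y e) + y β = ∑ e ∈ univ.erase r₀, y e :=
      Finset.sum_erase_add _ y hβmem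
    have e2 : (∑ e ∈ (univ.erase r₀).erase β, w e) + w β = ∑ e ∈ univ.erase r₀, w e :=
      Finset.sum_erase_add _ w hβmem
    have e3 : (∑ e ∈ ((univ.erase r₀).erase β).erase c, y e) + y c
        = ∑ e ∈ (univ.erase r₀).erase β, y e :=
      Finset.sum_erase_add _ y (Finset.mem_erase.mpr ⟨hcβ, Finset.mem_erase.mpr ⟨hcr, mem_univ c⟩⟩)
    have e4 : (∑ e ∈ ((univ.erase r₀).erase β).erase c, w e) + w c
        = ∑ e ∈ (univ.erase r₀).erase β, w e :=
      Finset.sum_erase_add _ w (Finset.mem_erase.mpr ⟨hcβ, Finset.mem_erase.mpr ⟨hcr, mem_univ c⟩⟩)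
    have e5 : ∑ e ∈ ((univ.erase r₀).erase β).erase c, w e
        ≤ ∑ e ∈ ((univ.erase r₀).erase β).erase c, y e := by
      apply Finset.sum_le_sum
      intro e he
      exact h1 e (Finset.ne_of_mem_erase (Finset.mem_of_mem_erase (Finset.mem_of_mem_erase he)))
    omega
  have hβval : y β = w β + 1 := by
    have e1 : (∑ e ∈ (univ.erase r₀).erase β, y e) + y β = ∑ e ∈ univ.erase r₀, y e :=
      Finset.sum_erase_add _ y hβmem
    have e2 : (∑ e ∈ (univ.erase r₀).erase β, w e) + w β = ∑ e ∈ univ.erase r₀, w e :=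
      Finset.sum_erase_add _ w hβmem
    have e5 : ∑ e ∈ (univ.erase r₀).erase β, y e = ∑ e ∈ (univ.erase r₀).erase β, w e :=
      Finset.sum_congr rfl hrest
    omega
  refine ⟨β, hβr, funext fun e => ?_⟩
  by_cases he : e = r₀
  · rw [he, add_chi_ne u (Ne.symm hβr)]
    have hw2 : w r₀ = u r₀ + 1 := add_chi_self u r₀
    omega
  · by_cases he2 : e = β
    · rw [he2, add_chi_self]
      have hw2 : w β = u β := by rw [hw, add_chi_ne u hβr]
      omega
    · have := hrest e (Finset.mem_erase.mpr ⟨he2, Finset.mem_erase.mpr ⟨he, mem_univ e⟩⟩)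
      rw [add_chi_ne u he2, this, hw, add_chi_ne u he]


/-! ### sensitivity: one extra unit of load -/

/-- If `u + χ_{r₀}` is optimal at loads `t`, then after the load increases by one at `r₀`,
some `u + χ_b` is at least as good as any fixed `y ∈ B`. -/
lemma key1 {F : Finset E → ℕ} (hF : IsPolymatroidRank F) {CC : E → ℕ → ℕ → ℝ}
    (hreg : ∀ e, Regular (CC e)) {dd : ℕ} {t u : E → ℕ} {r₀ : E}
    (hu1 : u + chi r₀ ∈ Base F dd)
    (hopt : ∀ y ∈ Base F dd, totalCost CC t (u + chi r₀) ≤ totalCost CC t y) :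
    ∀ y ∈ Base F dd, ∃ b, (u + chi b) ∈ Base F dd ∧
      totalCost CC (t + chi r₀) (u + chi b) ≤ totalCost CC (t + chi r₀) y := by
  suffices H : ∀ N, ∀ y, y ∈ Base F dd → l1 y (u + chi r₀) ≤ N → ∃ b,
      (u + chi b) ∈ Base F dd ∧
      totalCost CC (t + chi r₀) (u + chi b) ≤ totalCost CC (t + chi r₀) y by
    intro y hy
    exact H (l1 y (u + chi r₀)) y hy le_rfl
  intro N
  induction N with
  | zero =>
      intro y hy hl
      have : y = u + chi r₀ := l1_eq_zero (Nat.le_zero.mp hl)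
      exact ⟨r₀, hu1, by rw [this]⟩
  | succ N ih =>
      intro y hy hl
      by_cases hyu : y = u + chi r₀
      · exact ⟨r₀, hu1, by rw [hyu]⟩
      rcases le_or_gt ((u + chi r₀) r₀) (y r₀) with hcase | hcase
      · -- case 1 : y uses at least as much of r₀; u + χ_{r₀} still beats y
        refine ⟨r₀, hu1, ?_⟩
        rw [cost_bump, cost_bump]
        have h1 : totalCost CC t (u + chi r₀) ≤ totalCost CC t y := hopt y hy
        have h2 : CC r₀ ((u + chi r₀) r₀) (t r₀ + 1) - CC r₀ ((u + chi r₀) r₀) (t r₀)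
            ≤ CC r₀ (y r₀) (t r₀ + 1) - CC r₀ (y r₀) (t r₀) := regd (hreg r₀) (t r₀) hcase
        linarith
      · -- case 2 : y uses strictly less of r₀
        obtain ⟨β, hβlt, hmvx, hmvy⟩ := exchange hF hu1 hy hcase
        have hβr : β ≠ r₀ := by
          intro h
          rw [h] at hβlt
          omega
        rw [mv_add_chi u hβr] at hmvx
        have hyβ : 1 ≤ y β := by
          have : (u + chi r₀) β = u β := add_chi_ne u hβr
          omega
        have huβ : (u + chi r₀) β = u β := add_chi_ne u hβr
        have hur : (u + chi r₀) r₀ = u r₀ + 1 := add_chi_self u r₀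
        -- value comparison of the two insertions at loads t
        have hval : CC r₀ (u r₀ + 1) (t r₀) - CC r₀ (u r₀) (t r₀)
            ≤ CC β (u β + 1) (t β) - CC β (u β) (t β) := by
          have h1 := hopt (u + chi β) hmvx
          rw [cost_add_chi, cost_add_chi] at h1
          linarith
        rcases lt_or_ge (y r₀ + 1) ((u + chi r₀) r₀) with hcase2 | hcase2
        · -- 2a : gap at least two
          set y' := mv y β r₀ with hy'
          have hy'mem : y' ∈ Base F dd := hmvy
          have hcost : totalCost CC (t + chi r₀) y' ≤ totalCost CC (t + chi r₀) y := by
            rw [hy', cost_mv CC _ y hβr hyβ]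
            have e1 : (t + chi r₀) β = t β := add_chi_ne t hβr
            have e2 : (t + chi r₀) r₀ = t r₀ + 1 := add_chi_self t r₀
            rw [e1, e2]
            -- A ≤ R
            have b1 : CC r₀ (y r₀ + 1) (t r₀ + 1) - CC r₀ (y r₀) (t r₀ + 1)
                ≤ CC r₀ (y r₀ + 2) (t r₀) - CC r₀ (y r₀ + 1) (t r₀) := regc (hreg r₀) _ _
            have b2 : CC r₀ (y r₀ + 2) (t r₀) - CC r₀ (y r₀ + 1) (t r₀)
                ≤ CC r₀ (u r₀ + 1) (t r₀) - CC r₀ (u r₀) (t r₀) := by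
              have : y r₀ + 1 ≤ u r₀ := by omega
              exact regx (hreg r₀) (t r₀) this
            obtain ⟨k, hk⟩ : ∃ k, y β = k + 1 := ⟨y β - 1, by omega⟩
            have b3 : CC β (u β + 1) (t β) - CC β (u β) (t β)
                ≤ CC β (y β) (t β) - CC β (y β - 1) (t β) := by
              rw [hk]
              simp only [Nat.add_sub_cancel]
              exact regx (hreg β) (t β) (by omega)
            linarith
          have hl' : l1 y' (u + chi r₀) ≤ N := by
            have h := l1_mv (y := y) (w := u + chi r₀) (a := β) (c := r₀) hβr hβlt hcase
            rw [← hy'] at h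
            omega
          obtain ⟨b, hb1, hb2⟩ := ih y' hy'mem hl'
          exact ⟨b, hb1, le_trans hb2 hcost⟩
        · -- 2b : y r₀ = u r₀ exactly
          have h2b : y r₀ + 1 = (u + chi r₀) r₀ := by omega
          by_cases hc : ∃ c, c ≠ r₀ ∧ y c < (u + chi r₀) c
          · -- 2b-i : another deficient coordinate
            obtain ⟨c, hcr, hclt⟩ := hc
            obtain ⟨β', hβ'lt, hmvx', hmvy'⟩ := exchange hF hu1 hy hclt
            have hβ'r : β' ≠ r₀ := by
              intro h
              rw [h] at hβ'lt
              omega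
            have hβ'c : β' ≠ c := by
              intro h
              rw [h] at hβ'lt
              omega
            have hyβ' : 1 ≤ y β' := by
              have : (u + chi r₀) β' = u β' := add_chi_ne u hβ'r
              omega
            have huβ' : (u + chi r₀) β' = u β' := add_chi_ne u hβ'r
            have huc : (u + chi r₀) c = u c := add_chi_ne u hcr
            have hucpos : 1 ≤ u c := by omega
            set y' := mv y β' c with hy'
            have hy'mem : y' ∈ Base F dd := hmvy'
            have hcost : totalCost CC (t + chi r₀) y' ≤ totalCost CC (t + chi r₀) y := by
              rw [hy', cost_mv CC _ y hβ'c hyβ']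
              have e1 : (t + chi r₀) β' = t β' := add_chi_ne t hβ'r
              have e2 : (t + chi r₀) c = t c := add_chi_ne t hcr
              rw [e1, e2]
              -- optimality of u + χ_{r₀} against the exchange c → β'
              have h1 := hopt (mv (u + chi r₀) c β') hmvx'
              rw [cost_mv CC t (u + chi r₀) (Ne.symm hβ'c) (by omega)] at h1
              rw [huβ', huc] at h1
              obtain ⟨k, hk⟩ : ∃ k, u c = k + 1 := ⟨u c - 1, by omega⟩
              have b1 : CC c (y c + 1) (t c) - CC c (y c) (t c)
                  ≤ CC c (u c) (t c) - CC c (u c - 1) (t c) := by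
                rw [hk]
                simp only [Nat.add_sub_cancel]
                exact regx (hreg c) (t c) (by omega)
              obtain ⟨k', hk'⟩ : ∃ k', y β' = k' + 1 := ⟨y β' - 1, by omega⟩
              have b2 : CC β' (u β' + 1) (t β') - CC β' (u β') (t β')
                  ≤ CC β' (y β') (t β') - CC β' (y β' - 1) (t β') := by
                rw [hk']
                simp only [Nat.add_sub_cancel]
                exact regx (hreg β') (t β') (by omega)
              linarith
            have hl' : l1 y' (u + chi r₀) ≤ N := by
              have h := l1_mv (y := y) (w := u + chi r₀) (a := β') (c := c) hβ'c hβ'lt hclt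
              rw [← hy'] at h
              omega
            obtain ⟨b, hb1, hb2⟩ := ih y' hy'mem hl'
            exact ⟨b, hb1, le_trans hb2 hcost⟩
          · -- 2b-ii : y is itself of the form u + χ_β
            push_neg at hc
            have h1 : ∀ c, c ≠ r₀ → (u + chi r₀) c ≤ y c := by
              intro c hcr
              exact hc c hcr
            have hs : ∑ e, y e = ∑ e, (u + chi r₀) e := by
              rw [hy.2, hu1.2]
            obtain ⟨β₀, hβ₀r, hyeq⟩ := ident h1 h2b hs
            refine ⟨β₀, ?_, ?_⟩
            · rw [← hyeq]; exact hy
            · rw [← hyeq]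


/-! ### greedy step and stability lemmas -/

lemma mv_mono {u w : E → ℕ} (h : ∀ e, u e ≤ w e) (a b : E) (e : E) :
    mv u a b e ≤ mv w a b e := by
  simp only [mv]
  have := h e
  omega

/-- greedy step: an optimum of rank `m` plus a cheapest feasible increment is
optimal at rank `m+1`. -/
lemma key2 {F : Finset E → ℕ} (hF : IsPolymatroidRank F) {CC : E → ℕ → ℕ → ℝ}
    (hreg : ∀ e, Regular (CC e)) {m : ℕ} {t u : E → ℕ}
    (hu : u ∈ Base F m)
    (huopt : ∀ y ∈ Base F m, totalCost CC t u ≤ totalCost CC t y)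
    {bs : E} (hbs : u + chi bs ∈ Base F (m + 1))
    (hmin : ∀ b, u + chi b ∈ Base F (m + 1) →
      CC bs (u bs + 1) (t bs) - CC bs (u bs) (t bs) ≤ CC b (u b + 1) (t b) - CC b (u b) (t b)) :
    ∀ y ∈ Base F (m + 1), totalCost CC t (u + chi bs) ≤ totalCost CC t y := by
  set w := u + chi bs with hw
  suffices H : ∀ N, ∀ y, y ∈ Base F (m + 1) → l1 y w ≤ N →
      totalCost CC t w ≤ totalCost CC t y by
    intro y hy
    exact H (l1 y w) y hy le_rfl
  intro N
  induction N with
  | zero =>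
      intro y hy hl
      rw [l1_eq_zero (Nat.le_zero.mp hl)]
  | succ N ih =>
      intro y hy hl
      by_cases hyw : y = w
      · rw [hyw]
      obtain ⟨a, ha⟩ := exists_coord_lt hyw (by rw [hy.2, hbs.2])
      obtain ⟨c, hc, hmv1, hmv2⟩ := exchange hF hy hbs ha
      have hac : a ≠ c := by
        intro h
        rw [h] at ha
        omega
      have hya : 1 ≤ y a := by omega
      have hwc : 1 ≤ w c := by omega
      set y' := mv y a c with hy'
      have hcost : totalCost CC t y' ≤ totalCost CC t y := by
        rw [hy', cost_mv CC t y hac hya]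
        -- middle bound : CC c (w c) - CC c (w c - 1) ≤ CC a (w a + 1) - CC a (w a)
        have hmid : CC c (w c) (t c) - CC c (w c - 1) (t c)
            ≤ CC a (w a + 1) (t a) - CC a (w a) (t a) := by
          by_cases hcb : c = bs
          · -- removal value is the minimal insertion value
            have habs : a ≠ bs := fun h => hac (h.trans hcb.symm)
            have hmem : u + chi a ∈ Base F (m + 1) := by
              have : mv w c a = u + chi a := by
                rw [hcb, hw]
                exact mv_add_chi u habs
              rw [← this]
              exact hmv2
            have h1 := hmin a hmem
            have e1 : w c = u bs + 1 := by rw [hcb, hw, add_chi_self]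
            have e2 : w a = u a := by rw [hw]; exact add_chi_ne u habs
            rw [e1, e2]
            simp only [Nat.add_sub_cancel]
            rw [hcb]
            exact h1
          · -- use optimality of u at rank m
            have hwcu : w c = u c := by rw [hw]; exact add_chi_ne u hcb
            have huc : 1 ≤ u c := by omega
            have hmemu : mv u c a ∈ Base F m := by
              refine mem_base_of_le (x := mv w c a) (mv_mono (fun e => ?_) c a) hmv2.1 ?_
              · rw [hw]; simp only [add_chi_apply]; omega
              · have hs := sum_mv u (Ne.symm hac) huc univ
                simp only [mem_univ, if_pos] at hs
                have := hu.2
                omega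
            have h1 := huopt (mv u c a) hmemu
            rw [cost_mv CC t u (Ne.symm hac) huc] at h1
            have h2 : CC a (u a + 1) (t a) - CC a (u a) (t a)
                ≤ CC a (w a + 1) (t a) - CC a (w a) (t a) := by
              by_cases hab : a = bs
              · have : w a = u a + 1 := by rw [hw, hab, add_chi_self]
                rw [this]
                exact regx (hreg a) (t a) (by omega)
              · have : w a = u a := by rw [hw]; exact add_chi_ne u hab
                rw [this]
            rw [hwcu]
            linarith
        obtain ⟨k, hk⟩ : ∃ k, w c = k + 1 := ⟨w c - 1, by omega⟩
        have b1 : CC c (y c + 1) (t c) - CC c (y c) (t c)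
            ≤ CC c (w c) (t c) - CC c (w c - 1) (t c) := by
          rw [hk]
          simp only [Nat.add_sub_cancel]
          exact regx (hreg c) (t c) (by omega)
        obtain ⟨k', hk'⟩ : ∃ k', y a = k' + 1 := ⟨y a - 1, by omega⟩
        have b2 : CC a (w a + 1) (t a) - CC a (w a) (t a)
            ≤ CC a (y a) (t a) - CC a (y a - 1) (t a) := by
          rw [hk']
          simp only [Nat.add_sub_cancel]
          exact regx (hreg a) (t a) (by omega)
        linarith
      have hl' : l1 y' w ≤ N := by
        have h := l1_mv (y := y) (w := w) (a := a) (c := c) hac ha hc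
        rw [← hy'] at h
        omega
      exact le_trans (ih y' hmv1 hl') hcost

/-- downward stability : if `W` is optimal at loads `O` and the insertion bound holds,
then `W` remains optimal when the load at `r` drops by one. -/
lemma key3 {F : Finset E → ℕ} (hF : IsPolymatroidRank F) {CC : E → ℕ → ℕ → ℝ}
    (hreg : ∀ e, Regular (CC e)) {dd : ℕ} {O W : E → ℕ} {r : E}
    (hW : W ∈ Base F dd) (hOr : 1 ≤ O r)
    (hWopt : ∀ y ∈ Base F dd, totalCost CC O W ≤ totalCost CC O y)
    (hbound : ∀ c, c ≠ r → 1 ≤ W c → mv W c r ∈ Base F dd →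
      CC c (W c) (O c) - CC c (W c - 1) (O c)
        ≤ CC r (W r + 1) (O r - 1) - CC r (W r) (O r - 1)) :
    ∀ y ∈ Base F dd, totalCost CC (low O r) W ≤ totalCost CC (low O r) y := by
  have hOlow : ∀ v : E → ℕ, totalCost CC O v
      = totalCost CC (low O r) v + (CC r (v r) (O r) - CC r (v r) (O r - 1)) := by
    intro v
    have h1 : totalCost CC ((low O r) + chi r) v = totalCost CC (low O r) v
        + (CC r (v r) ((low O r) r + 1) - CC r (v r) ((low O r) r)) := cost_bump CC _ v r
    rw [low_add_chi hOr] at h1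
    rw [h1, low_self]
    have : O r - 1 + 1 = O r := by omega
    rw [this]
  suffices H : ∀ N, ∀ y, y ∈ Base F dd → l1 y W ≤ N →
      totalCost CC (low O r) W ≤ totalCost CC (low O r) y by
    intro y hy
    exact H (l1 y W) y hy le_rfl
  intro N
  induction N with
  | zero =>
      intro y hy hl
      rw [l1_eq_zero (Nat.le_zero.mp hl)]
  | succ N ih =>
      intro y hy hl
      by_cases hyw : y = W
      · rw [hyw]
      rcases le_or_gt (y r) (W r) with hyr | hyr
      · -- direct : use optimality at O and monotonicity of δ
        have h1 := hWopt y hy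
        rw [hOlow y, hOlow W] at h1
        have hδ : CC r (y r) (O r) - CC r (y r) (O r - 1)
            ≤ CC r (W r) (O r) - CC r (W r) (O r - 1) := by
          have h := regd (hreg r) (O r - 1) hyr
          have : O r - 1 + 1 = O r := by omega
          rw [this] at h
          exact h
        linarith
      · obtain ⟨c, hc, hmv1, hmv2⟩ := exchange hF hy hW hyr
        have hrc : r ≠ c := by
          intro h
          rw [← h] at hc
          omega
        have hyrpos : 1 ≤ y r := by omega
        have hWc : 1 ≤ W c := by omega
        set y' := mv y r c with hy'
        have hcost : totalCost CC (low O r) y' ≤ totalCost CC (low O r) y := by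
          rw [hy', cost_mv CC _ y hrc hyrpos]
          have e1 : (low O r) r = O r - 1 := low_self O r
          have e2 : (low O r) c = O c := low_ne O (Ne.symm hrc)
          rw [e1, e2]
          obtain ⟨k, hk⟩ : ∃ k, W c = k + 1 := ⟨W c - 1, by omega⟩
          have b1 : CC c (y c + 1) (O c) - CC c (y c) (O c)
              ≤ CC c (W c) (O c) - CC c (W c - 1) (O c) := by
            rw [hk]
            simp only [Nat.add_sub_cancel]
            exact regx (hreg c) (O c) (by omega)
          have b2 := hbound c (Ne.symm hrc) hWc hmv2
          obtain ⟨k', hk'⟩ : ∃ k', y r = k' + 1 := ⟨y r - 1, by omega⟩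
          have b3 : CC r (W r + 1) (O r - 1) - CC r (W r) (O r - 1)
              ≤ CC r (y r) (O r - 1) - CC r (y r - 1) (O r - 1) := by
            rw [hk']
            simp only [Nat.add_sub_cancel]
            exact regx (hreg r) (O r - 1) (by omega)
          linarith
        have hl' : l1 y' W ≤ N := by
          have h := l1_mv (y := y) (w := W) (a := r) (c := c) hrc hyr hc
          rw [← hy'] at h
          omega
        exact le_trans (ih y' hmv1 hl') hcost

/-- a player using none of `r` stays optimal when the load at `r` increases. -/
lemma still_opt_of_zero {F : Finset E → ℕ} {CC : E → ℕ → ℕ → ℝ}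
    (hreg : ∀ e, Regular (CC e)) {dd : ℕ} {t z : E → ℕ} {r : E}
    (hzr : z r = 0)
    (hopt : ∀ y ∈ Base F dd, totalCost CC t z ≤ totalCost CC t y) :
    ∀ y ∈ Base F dd, totalCost CC (t + chi r) z ≤ totalCost CC (t + chi r) y := by
  intro y hy
  rw [cost_bump, cost_bump]
  have h1 := hopt y hy
  have h2 : CC r (z r) (t r + 1) - CC r (z r) (t r)
      ≤ CC r (y r) (t r + 1) - CC r (y r) (t r) := regd (hreg r) (t r) (by omega)
  linarith

lemma sup_tight' {F : Finset E → ℕ} (hF : IsPolymatroidRank F) {x : E → ℕ}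
    (hx : ∀ U : Finset E, ∑ e ∈ U, x e ≤ F U) (S : Finset E) (g : E → Finset E)
    (hg : ∀ a ∈ S, ∑ e ∈ g a, x e = F (g a)) :
    ∑ e ∈ S.sup g, x e = F (S.sup g) := by
  induction S using Finset.induction_on with
  | empty => simpa using hF.1.symm
  | @insert a S ha ih =>
      rw [Finset.sup_insert]
      exact (tight_union_inter hF hx (hg a (mem_insert_self a S))
        (ih (fun b hb => hg b (mem_insert_of_mem hb)))).1

lemma exists_extension {F : Finset E → ℕ} (hF : IsPolymatroidRank F) {m : ℕ} {u : E → ℕ}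
    (hu : u ∈ Base F m) (hm : m < F univ) : ∃ b, u + chi b ∈ Base F (m + 1) := by
  by_contra h
  push_neg at h
  have htight : ∀ b : E, ∃ U : Finset E, b ∈ U ∧ ∑ e ∈ U, u e = F U := by
    intro b
    by_contra hb
    push_neg at hb
    exact h b (add_chi_mem hu (fun U hbU =>
      lt_of_le_of_ne (hu.1 U) (hb U hbU)))
  choose g hg using htight
  have hsup := sup_tight' hF hu.1 univ g (fun a _ => (hg a).2)
  have huniv : univ.sup g = univ := by
    apply Finset.eq_univ_of_forall
    intro b
    exact Finset.mem_sup.mpr ⟨b, mem_univ b, (hg b).1⟩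
  rw [huniv] at hsup
  rw [hu.2] at hsup
  omega

lemma base_nonempty {F : Finset E → ℕ} (hF : IsPolymatroidRank F) {dd : ℕ} (h : dd ≤ F univ) :
    ∃ x, x ∈ Base F dd := by
  induction dd with
  | zero =>
      refine ⟨fun _ => 0, fun U => by simp, by simp⟩
  | succ m ih =>
      obtain ⟨x, hx⟩ := ih (by omega)
      obtain ⟨b, hb⟩ := exists_extension hF hx (by omega)
      exact ⟨x + chi b, hb⟩


/-! ### insertion lemmas -/

/-- (B) under the initial form of the floater invariant. -/
lemma insB_init {F : Finset E → ℕ} (hF : IsPolymatroidRank F) {CC : E → ℕ → ℕ → ℝ}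
    (hreg : ∀ e, Regular (CC e)) {m : ℕ} {O u : E → ℕ}
    (hu : u ∈ Base F m)
    (huopt : ∀ y ∈ Base F m, totalCost CC O u ≤ totalCost CC O y)
    {bs : E} (hbs : u + chi bs ∈ Base F (m + 1))
    (hmin : ∀ b, u + chi b ∈ Base F (m + 1) →
      CC bs (u bs + 1) (O bs) - CC bs (u bs) (O bs) ≤ CC b (u b + 1) (O b) - CC b (u b) (O b))
    (hObs : 1 ≤ O bs) :
    ∀ y ∈ Base F (m + 1),
      totalCost CC (low O bs) (u + chi bs) ≤ totalCost CC (low O bs) y := by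
  have hWopt := key2 hF hreg hu huopt hbs hmin
  refine key3 hF hreg hbs hObs hWopt ?_
  intro c hc hWc hmv
  have hWcu : (u + chi bs) c = u c := add_chi_ne u hc
  have hWbs : (u + chi bs) bs = u bs + 1 := add_chi_self u bs
  rw [hWcu, hWbs]
  -- RHS ≥ val bs
  have hrhs : CC bs (u bs + 1) (O bs) - CC bs (u bs) (O bs)
      ≤ CC bs (u bs + 1 + 1) (O bs - 1) - CC bs (u bs + 1) (O bs - 1) := by
    have h := regc (hreg bs) (u bs) (O bs - 1)
    have e : O bs - 1 + 1 = O bs := by omega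
    rw [e] at h
    exact h
  -- LHS ≤ val bs via optimality of u at rank m
  have hucpos : 1 ≤ u c := by rwa [hWcu] at hWc
  have hcbs : c ≠ bs := hc
  have hmemu : mv u c bs ∈ Base F m := by
    refine mem_base_of_le (x := mv (u + chi bs) c bs) (mv_mono (fun e => ?_) c bs) hmv.1 ?_
    · simp only [add_chi_apply]; omega
    · have hs := sum_mv u (Ne.symm hcbs).symm hucpos univ
      simp only [mem_univ, if_pos] at hs
      have := hu.2
      omega
  have h1 := huopt (mv u c bs) hmemu
  rw [cost_mv CC O u hcbs hucpos] at h1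
  linarith

/-- (A) under the source form of the floater invariant. -/
lemma insA_src {F : Finset E → ℕ} (hF : IsPolymatroidRank F) {CC : E → ℕ → ℕ → ℝ}
    (hreg : ∀ e, Regular (CC e)) {dd : ℕ} {O u : E → ℕ} {r₀ : E}
    (hOr : 1 ≤ O r₀)
    (hu1 : u + chi r₀ ∈ Base F dd)
    (huopt : ∀ y ∈ Base F dd, totalCost CC (low O r₀) (u + chi r₀) ≤ totalCost CC (low O r₀) y)
    {bs : E} (hbs : u + chi bs ∈ Base F dd)
    (hmin : ∀ b, u + chi b ∈ Base F dd →
      CC bs (u bs + 1) (O bs) - CC bs (u bs) (O bs) ≤ CC b (u b + 1) (O b) - CC b (u b) (O b)) :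
    ∀ y ∈ Base F dd, totalCost CC O (u + chi bs) ≤ totalCost CC O y := by
  intro y hy
  have hO : (low O r₀) + chi r₀ = O := low_add_chi hOr
  have hkey := key1 hF hreg hu1 huopt y hy
  rw [hO] at hkey
  obtain ⟨b, hb, hble⟩ := hkey
  calc totalCost CC O (u + chi bs)
      = totalCost CC O u + (CC bs (u bs + 1) (O bs) - CC bs (u bs) (O bs)) := cost_add_chi CC O u bs
    _ ≤ totalCost CC O u + (CC b (u b + 1) (O b) - CC b (u b) (O b)) := by
        have := hmin b hb
        linarith
    _ = totalCost CC O (u + chi b) := (cost_add_chi CC O u b).symm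
    _ ≤ totalCost CC O y := hble

/-- (B) under the source form of the floater invariant. -/
lemma insB_src {F : Finset E → ℕ} (hF : IsPolymatroidRank F) {CC : E → ℕ → ℕ → ℝ}
    (hreg : ∀ e, Regular (CC e)) {dd : ℕ} {O u : E → ℕ} {r₀ : E}
    (hOr : 1 ≤ O r₀)
    (hu1 : u + chi r₀ ∈ Base F dd)
    (huopt : ∀ y ∈ Base F dd, totalCost CC (low O r₀) (u + chi r₀) ≤ totalCost CC (low O r₀) y)
    {bs : E} (hbs : u + chi bs ∈ Base F dd)
    (hmin : ∀ b, u + chi b ∈ Base F dd →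
      CC bs (u bs + 1) (O bs) - CC bs (u bs) (O bs) ≤ CC b (u b + 1) (O b) - CC b (u b) (O b))
    (hObs : 1 ≤ O bs) :
    ∀ y ∈ Base F dd,
      totalCost CC (low O bs) (u + chi bs) ≤ totalCost CC (low O bs) y := by
  have hWopt := insA_src hF hreg hOr hu1 huopt hbs hmin
  refine key3 hF hreg hbs hObs hWopt ?_
  intro c hc hWc hmv
  have hWcu : (u + chi bs) c = u c := add_chi_ne u hc
  have hWbs : (u + chi bs) bs = u bs + 1 := add_chi_self u bs
  rw [hWcu, hWbs]
  have hucpos : 1 ≤ u c := by rwa [hWcu] at hWc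
  -- RHS ≥ val bs
  have hrhs : CC bs (u bs + 1) (O bs) - CC bs (u bs) (O bs)
      ≤ CC bs (u bs + 1 + 1) (O bs - 1) - CC bs (u bs + 1) (O bs - 1) := by
    have h := regc (hreg bs) (u bs) (O bs - 1)
    have e : O bs - 1 + 1 = O bs := by omega
    rw [e] at h
    exact h
  have hval_t : ∀ b, totalCost CC (low O r₀) (u + chi b)
      = totalCost CC (low O r₀) u
        + (CC b (u b + 1) ((low O r₀) b) - CC b (u b) ((low O r₀) b)) :=
    fun b => cost_add_chi CC (low O r₀) u b
  by_cases hcr : c = r₀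
  · -- c = r₀, hence bs ≠ r₀
    have hbsr : bs ≠ r₀ := fun h => hc (hcr.trans h.symm)
    have hucpos' : 1 ≤ u r₀ := by rw [← hcr]; exact hucpos
    -- step 1 : C⁻(u r₀ ; O r₀) ≤ C⁻(u r₀ + 1 ; O r₀ - 1)
    have step1 : CC r₀ (u r₀) (O r₀) - CC r₀ (u r₀ - 1) (O r₀)
        ≤ CC r₀ (u r₀ + 1) (O r₀ - 1) - CC r₀ (u r₀) (O r₀ - 1) := by
      obtain ⟨k, hk⟩ : ∃ k, u r₀ = k + 1 := ⟨u r₀ - 1, by omega⟩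
      have h := regc (hreg r₀) k (O r₀ - 1)
      have e : O r₀ - 1 + 1 = O r₀ := by omega
      rw [e] at h
      rw [hk]
      simp only [Nat.add_sub_cancel]
      exact h
    -- step 2 : minimality of the insertion at r₀ under loads low O r₀
    have h1 := huopt (u + chi bs) hbs
    rw [hval_t bs, hval_t r₀] at h1
    have e1 : (low O r₀) r₀ = O r₀ - 1 := low_self O r₀
    have e2 : (low O r₀) bs = O bs := low_ne O hbsr
    rw [e1, e2] at h1
    rw [hcr]
    linarith
  · -- c ≠ r₀ : uncross feasibility and use optimality of û
    have huhc : 1 ≤ (u + chi r₀) c := by rw [add_chi_ne u hcr]; omega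
    have hWcpos : 1 ≤ (u + chi bs) c := by rw [add_chi_ne u hc]; omega
    have hX : mv (u + chi r₀) c bs ∈ Base F dd := by
      constructor
      · intro U
        have hs1 := sum_mv (u + chi r₀) hc huhc U
        have hs2 := sum_mv (u + chi bs) hc hWcpos U
        have hA := hmv.1 U
        have hB := hu1.1 U
        have hC := hbs.1 U
        have hr1 := sum_add_chi u r₀ U
        have hr2 := sum_add_chi u bs U
        by_cases h1 : bs ∈ U <;> by_cases h2 : c ∈ U <;> by_cases h3 : r₀ ∈ U <;>
          simp only [h1, h2, h3, if_pos, if_neg, if_true, if_false] at hs1 hs2 hr1 hr2 <;>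
          omega
      · have hs1 := sum_mv (u + chi r₀) hc huhc univ
        simp only [mem_univ, if_pos] at hs1
        have := hu1.2
        omega
    have h1 := huopt (mv (u + chi r₀) c bs) hX
    rw [cost_mv CC (low O r₀) (u + chi r₀) hc huhc] at h1
    have e3 : (u + chi r₀) c = u c := add_chi_ne u hcr
    have e4 : (low O r₀) c = O c := low_ne O hcr
    rw [e3, e4] at h1
    by_cases hbsr : bs = r₀
    · have e5 : (u + chi r₀) bs = u bs + 1 := by rw [hbsr, add_chi_self]
      have e6 : (low O r₀) bs = O bs - 1 := by rw [hbsr, low_self]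
      rw [e5, e6] at h1
      linarith
    · have e5 : (u + chi r₀) bs = u bs := add_chi_ne u hbsr
      have e6 : (low O r₀) bs = O bs := low_ne O hbsr
      rw [e5, e6] at h1
      linarith


/-! ### the game -/

section Game

open scoped Classical

variable {n : ℕ}

/-- load of the other players -/
def oth (z : Fin n → E → ℕ) (i : Fin n) : E → ℕ := fun e => ∑ j ∈ univ.erase i, z j e

/-- total load -/
def lam (z : Fin n → E → ℕ) : E → ℕ := fun e => ∑ j, z j e

def IsNE (f : Fin n → Finset E → ℕ) (C : Fin n → E → ℕ → ℕ → ℝ) (d : Fin n → ℕ)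
    (z : Fin n → E → ℕ) : Prop :=
  (∀ i, z i ∈ Base (f i) (d i)) ∧
  ∀ i, ∀ y ∈ Base (f i) (d i),
    totalCost (C i) (oth z i) (z i) ≤ totalCost (C i) (oth z i) y

/-- the float-state invariant -/
def Inv (f : Fin n → Finset E → ℕ) (C : Fin n → E → ℕ → ℕ → ℝ) (d : Fin n → ℕ)
    (z : Fin n → E → ℕ) (p : Fin n) : Prop :=
  1 ≤ d p ∧
  (∀ j, j ≠ p → z j ∈ Base (f j) (d j)) ∧
  z p ∈ Base (f p) (d p - 1) ∧
  (∀ m, m ≠ p → ∀ y ∈ Base (f m) (d m),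
    totalCost (C m) (oth z m) (z m) ≤ totalCost (C m) (oth z m) y) ∧
  ((∀ y ∈ Base (f p) (d p - 1),
      totalCost (C p) (oth z p) (z p) ≤ totalCost (C p) (oth z p) y) ∨
   (∃ r₀, 1 ≤ oth z p r₀ ∧ (z p + chi r₀) ∈ Base (f p) (d p) ∧
      ∀ y ∈ Base (f p) (d p),
        totalCost (C p) (low (oth z p) r₀) (z p + chi r₀)
          ≤ totalCost (C p) (low (oth z p) r₀) y))

lemma lam_eq_oth_add (z : Fin n → E → ℕ) (i : Fin n) (e : E) :
    lam z e = oth z i e + z i e := by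
  unfold lam oth
  rw [← Finset.sum_erase_add univ _ (mem_univ i)]

lemma oth_le_lam (z : Fin n → E → ℕ) (i : Fin n) (e : E) : oth z i e ≤ lam z e := by
  rw [lam_eq_oth_add z i e]; omega

lemma single_le_oth (z : Fin n → E → ℕ) {i m : Fin n} (hmi : m ≠ i) (e : E) :
    z m e ≤ oth z i e := by
  unfold oth
  exact Finset.single_le_sum (f := fun j => z j e) (fun j _ => Nat.zero_le _)
    (Finset.mem_erase.mpr ⟨hmi, mem_univ m⟩)

lemma oth_update_self (z : Fin n → E → ℕ) (p : Fin n) (w : E → ℕ) :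
    oth (Function.update z p w) p = oth z p := by
  funext e
  unfold oth
  apply Finset.sum_congr rfl
  intro j hj
  rw [Function.update_of_ne (Finset.ne_of_mem_erase hj)]

lemma oth_update_other (z : Fin n → E → ℕ) {p m : Fin n} (hmp : m ≠ p) (w : E → ℕ) (e : E) :
    oth (Function.update z p w) m e + z p e = oth z m e + w e := by
  unfold oth
  have hpm : p ∈ univ.erase m := Finset.mem_erase.mpr ⟨fun h => hmp h.symm, mem_univ p⟩
  rw [← Finset.sum_erase_add _ _ hpm, ← Finset.sum_erase_add _ (fun j => z j e) hpm]
  have h1 : ∀ j ∈ (univ.erase m).erase p, Function.update z p w j e = z j e := by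
    intro j hj
    rw [Function.update_of_ne (Finset.ne_of_mem_erase hj)]
  rw [Finset.sum_congr rfl h1, Function.update_self]
  omega

lemma oth_update_add_chi (z : Fin n → E → ℕ) {p m : Fin n} (hmp : m ≠ p) (b : E) :
    oth (Function.update z p (z p + chi b)) m = oth z m + chi b := by
  funext e
  have h := oth_update_other z hmp (z p + chi b) e
  rw [add_chi_apply] at h
  rw [add_chi_apply]
  omega

/-- two-coordinate update where the second cancels the first at `bs` -/
lemma oth_two_update (z : Fin n → E → ℕ) {p m j : Fin n} (hmp : m ≠ p) (hjp : j ≠ p)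
    (hjm : j ≠ m) (w wm : E → ℕ) (e : E) :
    oth (Function.update (Function.update z p w) m wm) j e + z p e + z m e
      = oth z j e + w e + wm e := by
  unfold oth
  have hpj : p ∈ univ.erase j := Finset.mem_erase.mpr ⟨fun h => hjp h.symm, mem_univ p⟩
  have hmj : m ∈ (univ.erase j).erase p :=
    Finset.mem_erase.mpr ⟨fun h => hmp h, Finset.mem_erase.mpr ⟨fun h => hjm h.symm, mem_univ m⟩⟩
  rw [← Finset.sum_erase_add _ _ hpj, ← Finset.sum_erase_add _ (fun i => z i e) hpj,
    ← Finset.sum_erase_add _ _ hmj, ← Finset.sum_erase_add _ (fun i => z i e) hmj]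
  have h1 : ∀ i ∈ ((univ.erase j).erase p).erase m,
      Function.update (Function.update z p w) m wm i e = z i e := by
    intro i hi
    rw [Function.update_of_ne (Finset.ne_of_mem_erase hi),
      Function.update_of_ne (Finset.ne_of_mem_erase (Finset.mem_of_mem_erase hi))]
  have h2 : Function.update (Function.update z p w) m wm m e = wm e := by
    rw [Function.update_self]
  have h3 : Function.update (Function.update z p w) m wm p e = w e := by
    rw [Function.update_of_ne (fun h => hmp h.symm), Function.update_self]
  rw [Finset.sum_congr rfl h1, h2, h3]
  omega

lemma lam_two_update (z : Fin n → E → ℕ) {p m : Fin n} (hmp : m ≠ p) (w wm : E → ℕ) (e : E) :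
    lam (Function.update (Function.update z p w) m wm) e + z p e + z m e
      = lam z e + w e + wm e := by
  unfold lam
  have hp : p ∈ (univ : Finset (Fin n)) := mem_univ p
  have hm : m ∈ univ.erase p := Finset.mem_erase.mpr ⟨hmp, mem_univ m⟩
  rw [← Finset.sum_erase_add _ _ hp, ← Finset.sum_erase_add _ (fun i => z i e) hp,
    ← Finset.sum_erase_add _ _ hm, ← Finset.sum_erase_add _ (fun i => z i e) hm]
  have h1 : ∀ i ∈ (univ.erase p).erase m,
      Function.update (Function.update z p w) m wm i e = z i e := by
    intro i hi
    rw [Function.update_of_ne (Finset.ne_of_mem_erase hi),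
      Function.update_of_ne (Finset.ne_of_mem_erase (Finset.mem_of_mem_erase hi))]
  have h2 : Function.update (Function.update z p w) m wm m e = wm e := by
    rw [Function.update_self]
  have h3 : Function.update (Function.update z p w) m wm p e = w e := by
    rw [Function.update_of_ne (fun h => hmp h.symm), Function.update_self]
  rw [Finset.sum_congr rfl h1, h2, h3]
  omega

lemma low_add_chi_cancel (X : E → ℕ) (b : E) : low (X + chi b) b = X := by
  funext e
  by_cases he : e = b
  · rw [he, low_self, add_chi_self]
    omega
  · rw [low_ne _ he, add_chi_ne _ he]

end Game


section Measure

open scoped Classical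

variable {n : ℕ}

/-- the per-unit potential -/
noncomputable def Psi (C : Fin n → E → ℕ → ℕ → ℝ) (z : Fin n → E → ℕ) : ℝ :=
  ∑ i, ∑ e, ∑ q ∈ Finset.range (z i e), (C i e (q + 1) (lam z e - q) - C i e q (lam z e - q))

/-- minimal insertion value of the floater -/
noncomputable def vmin (f : Fin n → Finset E → ℕ) (C : Fin n → E → ℕ → ℕ → ℝ) (d : Fin n → ℕ)
    (z : Fin n → E → ℕ) (p : Fin n) : ℝ :=
  if h : (univ.filter (fun b => (z p + chi b) ∈ Base (f p) (d p))).Nonempty then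
    (univ.filter (fun b => (z p + chi b) ∈ Base (f p) (d p))).inf' h
      (fun b => C p b (z p b + 1) (oth z p b) - C p b (z p b) (oth z p b))
  else 0

noncomputable def Phi (f : Fin n → Finset E → ℕ) (C : Fin n → E → ℕ → ℕ → ℝ) (d : Fin n → ℕ)
    (s : (Fin n → E → ℕ) × Fin n) : ℝ :=
  Psi C s.1 + vmin f C d s.1 s.2

noncomputable def SBox (f : Fin n → Finset E → ℕ) : Finset ((Fin n → E → ℕ) × Fin n) :=
  (Fintype.piFinset (fun i => Fintype.piFinset (fun _ => Finset.range (f i univ + 1)))) ×ˢ univ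

noncomputable def mu (f : Fin n → Finset E → ℕ) (C : Fin n → E → ℕ → ℕ → ℝ) (d : Fin n → ℕ)
    (s : (Fin n → E → ℕ) × Fin n) : ℕ :=
  ((SBox f).filter (fun s' => Phi f C d s' < Phi f C d s)).card

lemma mem_SBox {f : Fin n → Finset E → ℕ} {z : Fin n → E → ℕ} {p : Fin n}
    (h : ∀ i e, z i e ≤ f i univ) : (z, p) ∈ SBox f := by
  refine Finset.mem_product.mpr ⟨?_, mem_univ p⟩
  rw [Fintype.mem_piFinset]
  intro i
  rw [Fintype.mem_piFinset]
  intro e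
  rw [Finset.mem_range]
  exact Nat.lt_succ_of_le (h i e)

lemma mu_lt {f : Fin n → Finset E → ℕ} {C : Fin n → E → ℕ → ℕ → ℝ} {d : Fin n → ℕ}
    {s s' : (Fin n → E → ℕ) × Fin n} (hs' : s' ∈ SBox f)
    (h : Phi f C d s' < Phi f C d s) : mu f C d s' < mu f C d s := by
  apply Finset.card_lt_card
  rw [Finset.ssubset_iff_of_subset]
  · exact ⟨s', Finset.mem_filter.mpr ⟨hs', h⟩, fun hmem => by
      have := (Finset.mem_filter.mp hmem).2
      exact absurd this (lt_irrefl _)⟩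
  · intro a ha
    rw [Finset.mem_filter] at ha ⊢
    exact ⟨ha.1, lt_trans ha.2 h⟩

/-- bookkeeping : change of `Psi` along one insertion + removal -/
lemma psi_diff (C : Fin n → E → ℕ → ℕ → ℝ) (z : Fin n → E → ℕ) {p m : Fin n} (hmp : m ≠ p)
    {bs : E} (hzm : 1 ≤ z m bs) :
    Psi C (Function.update (Function.update z p (z p + chi bs)) m (low (z m) bs))
      = Psi C z
        + (C p bs (z p bs + 1) (oth z p bs) - C p bs (z p bs) (oth z p bs))
        - (C m bs (z m bs) (oth z m bs + 1) - C m bs (z m bs - 1) (oth z m bs + 1)) := by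
  set z2 := Function.update (Function.update z p (z p + chi bs)) m (low (z m) bs) with hz2
  have hz2p : z2 p = z p + chi bs := by
    rw [hz2, Function.update_of_ne (fun h => hmp h.symm), Function.update_self]
  have hz2m : z2 m = low (z m) bs := by
    rw [hz2, Function.update_self]
  have hz2rest : ∀ i, i ≠ p → i ≠ m → z2 i = z i := by
    intro i hip him
    rw [hz2, Function.update_of_ne him, Function.update_of_ne hip]
  have hlam : ∀ e, lam z2 e = lam z e := by
    intro e
    have h := lam_two_update z hmp (z p + chi bs) (low (z m) bs) e
    rw [← hz2] at h
    have h1 : (z p + chi bs) e = z p e + (if e = bs then 1 else 0) := rfl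
    have h2 : low (z m) bs e = z m e - (if e = bs then 1 else 0) := rfl
    by_cases he : e = bs
    · subst he
      rw [if_pos rfl] at h1 h2
      omega
    · rw [if_neg he] at h1 h2
      omega
  have hPsi2 : Psi C z2 = ∑ i, ∑ e, ∑ q ∈ Finset.range (z2 i e),
      (C i e (q + 1) (lam z e - q) - C i e q (lam z e - q)) := by
    unfold Psi
    exact Finset.sum_congr rfl (fun i _ => Finset.sum_congr rfl (fun e _ => by rw [hlam e]))
  have hmerase : m ∈ univ.erase p := Finset.mem_erase.mpr ⟨hmp, mem_univ m⟩
  -- inner sums as functions of the own vector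
  set G : Fin n → (E → ℕ) → ℝ := fun i v => ∑ e, ∑ q ∈ Finset.range (v e),
      (C i e (q + 1) (lam z e - q) - C i e q (lam z e - q)) with hG
  have hPsi2' : Psi C z2 = ∑ i, G i (z2 i) := hPsi2
  have hPsi1 : Psi C z = ∑ i, G i (z i) := rfl
  rw [hPsi2', hPsi1]
  rw [← Finset.sum_erase_add univ _ (mem_univ p), ← Finset.sum_erase_add (univ.erase p) _ hmerase,
    ← Finset.sum_erase_add univ (fun i => G i (z i)) (mem_univ p),
    ← Finset.sum_erase_add (univ.erase p) (fun i => G i (z i)) hmerase]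
  have hrest : ∑ i ∈ (univ.erase p).erase m, G i (z2 i)
      = ∑ i ∈ (univ.erase p).erase m, G i (z i) := by
    apply Finset.sum_congr rfl
    intro i hi
    rw [hz2rest i (Finset.ne_of_mem_erase (Finset.mem_of_mem_erase hi))
      (Finset.ne_of_mem_erase hi)]
  have hGp : G p (z2 p) = G p (z p)
      + (C p bs (z p bs + 1) (oth z p bs) - C p bs (z p bs) (oth z p bs)) := by
    rw [hz2p, hG]
    simp only
    rw [← Finset.sum_erase_add univ _ (mem_univ bs),
      ← Finset.sum_erase_add univ (fun e => ∑ q ∈ Finset.range (z p e),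
        (C p e (q + 1) (lam z e - q) - C p e q (lam z e - q))) (mem_univ bs)]
    have h1 : ∀ e ∈ univ.erase bs, (∑ q ∈ Finset.range ((z p + chi bs) e),
        (C p e (q + 1) (lam z e - q) - C p e q (lam z e - q)))
        = ∑ q ∈ Finset.range (z p e), (C p e (q + 1) (lam z e - q) - C p e q (lam z e - q)) := by
      intro e he
      rw [add_chi_ne (z p) (Finset.ne_of_mem_erase he)]
    rw [Finset.sum_congr rfl h1, add_chi_self, Finset.sum_range_succ]
    have h2 : lam z bs - z p bs = oth z p bs := by
      rw [lam_eq_oth_add z p bs]; omega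
    rw [h2]
    ring
  have hGm : G m (z m) = G m (z2 m)
      + (C m bs (z m bs) (oth z m bs + 1) - C m bs (z m bs - 1) (oth z m bs + 1)) := by
    rw [hz2m, hG]
    simp only
    rw [← Finset.sum_erase_add univ _ (mem_univ bs),
      ← Finset.sum_erase_add univ (fun e => ∑ q ∈ Finset.range (low (z m) bs e),
        (C m e (q + 1) (lam z e - q) - C m e q (lam z e - q))) (mem_univ bs)]
    have h1 : ∀ e ∈ univ.erase bs, (∑ q ∈ Finset.range (z m e),
        (C m e (q + 1) (lam z e - q) - C m e q (lam z e - q)))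
        = ∑ q ∈ Finset.range (low (z m) bs e),
          (C m e (q + 1) (lam z e - q) - C m e q (lam z e - q)) := by
      intro e he
      rw [low_ne (z m) (Finset.ne_of_mem_erase he)]
    rw [Finset.sum_congr rfl h1, low_self]
    obtain ⟨k, hk⟩ : ∃ k, z m bs = k + 1 := ⟨z m bs - 1, by omega⟩
    rw [hk]
    simp only [Nat.add_sub_cancel]
    rw [Finset.sum_range_succ]
    have h2 : lam z bs - k = oth z m bs + 1 := by
      rw [lam_eq_oth_add z m bs]; omega
    rw [h2]
    ring
  rw [hrest, hGp]
  linarith [hGm]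

end Measure


section Step

open scoped Classical

variable {n : ℕ}

lemma sum_low (X : E → ℕ) {b : E} (h : 1 ≤ X b) (U : Finset E) :
    (∑ e ∈ U, low X b e) + (if b ∈ U then 1 else 0) = ∑ e ∈ U, X e := by
  have hpt : ∀ e ∈ U, low X b e + (if e = b then 1 else 0) = X e := by
    intro e _
    by_cases he : e = b
    · subst he; rw [low_self, if_pos rfl]; omega
    · rw [low_ne _ he, if_neg he]
      omega
  calc (∑ e ∈ U, low X b e) + (if b ∈ U then 1 else 0)
      = ∑ e ∈ U, (low X b e + if e = b then 1 else 0) := by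
        rw [Finset.sum_add_distrib, sum_ite_mem]
    _ = ∑ e ∈ U, X e := Finset.sum_congr rfl hpt

lemma low_le (X : E → ℕ) (b : E) (e : E) : low X b e ≤ X e := by
  simp only [low]; omega

lemma step (f : Fin n → Finset E → ℕ) (hf : ∀ i, IsPolymatroidRank (f i))
    (C : Fin n → E → ℕ → ℕ → ℝ) (hreg : ∀ i e, Regular (C i e)) (d : Fin n → ℕ)
    (hd : ∀ i, d i ≤ f i univ) (z : Fin n → E → ℕ) (p : Fin n)
    (hInv : Inv f C d z p) :
    (∃ x, IsNE f C d x) ∨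
    ∃ z' : Fin n → E → ℕ, ∃ p' : Fin n, Inv f C d z' p' ∧ mu f C d (z', p') < mu f C d (z, p) := by
  obtain ⟨hdp, hmemJ, hmemP, hF1, hF2⟩ := hInv
  obtain ⟨m', hm'⟩ : ∃ m', d p = m' + 1 := ⟨d p - 1, by omega⟩
  have hm'' : d p - 1 = m' := by omega
  rw [hm''] at hmemP
  -- the candidate set and its minimizer
  have hcandne : ∃ b, (z p + chi b) ∈ Base (f p) (d p) := by
    rcases hF2 with hInit | ⟨r₀, h1, h2, _⟩
    · obtain ⟨b, hb⟩ := exists_extension (hf p) hmemP (by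
        have := hd p
        omega)
      exact ⟨b, by rw [hm']; exact hb⟩
    · exact ⟨r₀, h2⟩
  have hcandne' : (univ.filter (fun b => (z p + chi b) ∈ Base (f p) (d p))).Nonempty := by
    obtain ⟨b, hb⟩ := hcandne
    exact ⟨b, Finset.mem_filter.mpr ⟨mem_univ b, hb⟩⟩
  obtain ⟨bs, hbs_mem, hbs_min⟩ := Finset.exists_min_image _
    (fun b => C p b (z p b + 1) (oth z p b) - C p b (z p b) (oth z p b)) hcandne'
  have hbsBase : (z p + chi bs) ∈ Base (f p) (d p) := (Finset.mem_filter.mp hbs_mem).2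
  have hmin : ∀ b, (z p + chi b) ∈ Base (f p) (d p) →
      C p bs (z p bs + 1) (oth z p bs) - C p bs (z p bs) (oth z p bs)
        ≤ C p b (z p b + 1) (oth z p b) - C p b (z p b) (oth z p b) := by
    intro b hb
    exact hbs_min b (Finset.mem_filter.mpr ⟨mem_univ b, hb⟩)
  -- the (A) and (B) conclusions of the insertion
  have hA : ∀ y ∈ Base (f p) (d p),
      totalCost (C p) (oth z p) (z p + chi bs) ≤ totalCost (C p) (oth z p) y := by
    rcases hF2 with hInit | ⟨r₀, h1, h2, h3⟩
    · rw [hm''] at hInit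
      rw [hm'] at hbsBase hmin ⊢
      exact key2 (hf p) (hreg p) hmemP hInit hbsBase hmin
    · exact insA_src (hf p) (hreg p) h1 h2 h3 hbsBase hmin
  have hB : 1 ≤ oth z p bs → ∀ y ∈ Base (f p) (d p),
      totalCost (C p) (low (oth z p) bs) (z p + chi bs)
        ≤ totalCost (C p) (low (oth z p) bs) y := by
    intro hObs
    rcases hF2 with hInit | ⟨r₀, h1, h2, h3⟩
    · rw [hm''] at hInit
      rw [hm'] at hbsBase hmin ⊢
      exact insB_init (hf p) (hreg p) hmemP hInit hbsBase hmin hObs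
    · exact insB_src (hf p) (hreg p) h1 h2 h3 hbsBase hmin hObs
  -- the full profile after the insertion
  set z1 := Function.update z p (z p + chi bs) with hz1
  have hz1p : z1 p = z p + chi bs := Function.update_self _ _ _
  have hz1j : ∀ j, j ≠ p → z1 j = z j := fun j hj => Function.update_of_ne hj _ _
  have hothz1p : oth z1 p = oth z p := oth_update_self z p _
  have hothz1m : ∀ m : Fin n, m ≠ p → oth z1 m = oth z m + chi bs :=
    fun m hm => oth_update_add_chi z hm bs
  by_cases hAll : ∀ m, m ≠ p → ∀ y ∈ Base (f m) (d m),
      totalCost (C m) (oth z1 m) (z m) ≤ totalCost (C m) (oth z1 m) y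
  · -- a Nash equilibrium
    left
    refine ⟨z1, fun i => ?_, fun i => ?_⟩
    · by_cases hip : i = p
      · subst hip; rw [hz1p]; exact hbsBase
      · rw [hz1j i hip]; exact hmemJ i hip
    · by_cases hip : i = p
      · subst hip
        rw [hz1p, hothz1p]
        exact hA
      · rw [hz1j i hip]
        exact hAll i hip
  · -- a player wants to move a unit away from bs
    right
    push_neg at hAll
    obtain ⟨m, hmp, y₀, hy₀mem, hy₀⟩ := hAll
    rw [hothz1m m hmp] at hy₀
    -- the unhappy player must use bs
    have hzmbs : 1 ≤ z m bs := by
      by_contra h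
      have hz0 : z m bs = 0 := by omega
      have := still_opt_of_zero (F := f m) (hreg m) hz0 (hF1 m hmp) y₀ hy₀mem
      exact absurd this (not_le.mpr hy₀)
    have hObs : 1 ≤ oth z p bs := le_trans hzmbs (single_le_oth z hmp bs)
    set z2 := Function.update z1 m (low (z m) bs) with hz2
    have hz2p : z2 p = z p + chi bs := by
      rw [hz2, Function.update_of_ne (fun h => hmp h.symm), hz1p]
    have hz2m : z2 m = low (z m) bs := Function.update_self _ _ _
    have hz2rest : ∀ i, i ≠ p → i ≠ m → z2 i = z i := by
      intro i hip him
      rw [hz2, Function.update_of_ne him, hz1j i hip]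
    have hoth2m : oth z2 m = oth z m + chi bs := by
      rw [hz2, oth_update_self z1 m, hothz1m m hmp]
    have hoth2p : oth z2 p = low (oth z p) bs := by
      funext e
      have h := oth_update_other z1 (Ne.symm hmp) (low (z m) bs) e
      rw [hothz1p, hz1j m hmp] at h
      have h2 : low (z m) bs e = z m e - (if e = bs then 1 else 0) := rfl
      have h3 : low (oth z p) bs e = oth z p e - (if e = bs then 1 else 0) := rfl
      have h4 : z m e ≤ oth z p e := single_le_oth z hmp e
      rw [← hz2] at h
      by_cases he : e = bs
      · subst he
        rw [if_pos rfl] at h2 h3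
        omega
      · rw [if_neg he] at h2 h3
        omega
    have hoth2rest : ∀ j, j ≠ p → j ≠ m → oth z2 j = oth z j := by
      intro j hjp hjm
      funext e
      have h := oth_two_update z hmp hjp hjm (z p + chi bs) (low (z m) bs) e
      rw [← hz1, ← hz2] at h
      have h1 : (z p + chi bs) e = z p e + (if e = bs then 1 else 0) := rfl
      have h2 : low (z m) bs e = z m e - (if e = bs then 1 else 0) := rfl
      by_cases he : e = bs
      · subst he
        rw [if_pos rfl] at h1 h2
        omega
      · rw [if_neg he] at h1 h2
        omega
    have hz2mchi : z2 m + chi bs = z m := by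
      rw [hz2m]
      exact low_add_chi hzmbs
    have hdm : 1 ≤ d m := by
      have hs := (hmemJ m hmp).2
      have h2 : z m bs ≤ ∑ e, z m e := Finset.single_le_sum (fun e _ => Nat.zero_le _) (mem_univ bs)
      omega
    have hmembzm : z2 m ∈ Base (f m) (d m - 1) := by
      refine mem_base_of_le (x := z m) (fun e => ?_) (hmemJ m hmp).1 ?_
      · rw [hz2m]; exact low_le (z m) bs e
      · rw [hz2m]
        have hs := sum_low (z m) hzmbs univ
        simp only [mem_univ, if_pos] at hs
        have := (hmemJ m hmp).2
        omega
    refine ⟨z2, m, ⟨hdm, ?_, hmembzm, ?_, ?_⟩, ?_⟩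
    · -- memberships of the others
      intro j hjm
      by_cases hjp : j = p
      · subst hjp; rw [hz2p]; exact hbsBase
      · rw [hz2rest j hjp hjm]; exact hmemJ j hjp
    · -- optimality of all placed players
      intro j hjm
      by_cases hjp : j = p
      · subst hjp
        rw [hz2p, hoth2p]
        exact hB hObs
      · rw [hz2rest j hjp hjm, hoth2rest j hjp hjm]
        exact hF1 j hjp
    · -- the source form of the floater invariant for m
      right
      refine ⟨bs, ?_, ?_, ?_⟩
      · rw [hoth2m, add_chi_self]; omega
      · rw [hz2mchi]; exact hmemJ m hmp
      · rw [hz2mchi, hoth2m, low_add_chi_cancel]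
        exact hF1 m hmp
    · -- the measure decreases
      have hSBox : (z2, m) ∈ SBox f := by
        refine mem_SBox (fun i e => ?_)
        by_cases hip : i = p
        · rw [hip, hz2p]
          exact base_coord_le_univ (hf p) hbsBase e
        · by_cases him : i = m
          · have h1 : z2 i e ≤ z m e := by rw [him, hz2m]; exact low_le (z m) bs e
            exact le_trans h1 (le_of_eq_of_le (by rw [him]) (base_coord_le_univ (hf i) (hmemJ i hip) e))
          · rw [hz2rest i hip him]
            exact base_coord_le_univ (hf i) (hmemJ i hip) e
      apply mu_lt hSBox
      -- Phi (z2, m) < Phi (z, p)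
      have hvminzp : vmin f C d z p
          = C p bs (z p bs + 1) (oth z p bs) - C p bs (z p bs) (oth z p bs) := by
        unfold vmin
        rw [dif_pos hcandne']
        apply le_antisymm
        · exact Finset.inf'_le _ hbs_mem
        · exact Finset.le_inf' _ _ (fun b hb => hmin b (Finset.mem_filter.mp hb).2)
      -- bound on the new floater's minimal insertion value
      have hkey := key1 (hf m) (hreg m) (t := oth z m)
        (by rw [hz2mchi]; exact hmemJ m hmp)
        (by rw [hz2mchi]; exact hF1 m hmp) y₀ hy₀mem
      obtain ⟨bh, hbh_mem, hbh_le⟩ := hkey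
      have hcand2ne : (univ.filter (fun b => (z2 m + chi b) ∈ Base (f m) (d m))).Nonempty :=
        ⟨bh, Finset.mem_filter.mpr ⟨mem_univ bh, hbh_mem⟩⟩
      have hvminz2 : vmin f C d z2 m
          ≤ C m bh (z2 m bh + 1) (oth z2 m bh) - C m bh (z2 m bh) (oth z2 m bh) := by
        unfold vmin
        rw [dif_pos hcand2ne]
        exact Finset.inf'_le _ (Finset.mem_filter.mpr ⟨mem_univ bh, hbh_mem⟩)
      -- val'(bh) < B
      have hcost1 : totalCost (C m) (oth z2 m) (z2 m + chi bh)
          = totalCost (C m) (oth z2 m) (z2 m)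
            + (C m bh (z2 m bh + 1) (oth z2 m bh) - C m bh (z2 m bh) (oth z2 m bh)) :=
        cost_add_chi (C m) (oth z2 m) (z2 m) bh
      have hcost2 : totalCost (C m) (oth z2 m) (z m)
          = totalCost (C m) (oth z2 m) (z2 m)
            + (C m bs (z m bs) (oth z m bs + 1) - C m bs (z m bs - 1) (oth z m bs + 1)) := by
        have hc := cost_add_chi (C m) (oth z2 m) (z2 m) bs
        rw [hz2mchi] at hc
        have e1 : z2 m bs = z m bs - 1 := by rw [hz2m, low_self]
        have e2 : oth z2 m bs = oth z m bs + 1 := by rw [hoth2m, add_chi_self]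
        rw [e1, e2] at hc
        have e3 : z m bs - 1 + 1 = z m bs := by omega
        rw [e3] at hc
        exact hc
      have hothm2 : oth z m + chi bs = oth z2 m := hoth2m.symm
      rw [hothm2] at hbh_le hy₀
      have hvallt : C m bh (z2 m bh + 1) (oth z2 m bh) - C m bh (z2 m bh) (oth z2 m bh)
          < C m bs (z m bs) (oth z m bs + 1) - C m bs (z m bs - 1) (oth z m bs + 1) := by
        have h1 : totalCost (C m) (oth z2 m) (z2 m + chi bh)
            ≤ totalCost (C m) (oth z2 m) y₀ := hbh_le
        have h2 : totalCost (C m) (oth z2 m) y₀ < totalCost (C m) (oth z2 m) (z m) := hy₀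
        rw [hcost1] at h1
        rw [hcost2] at h2
        linarith
      -- assemble
      have hpsi := psi_diff C z hmp hzmbs
      rw [← hz1, ← hz2] at hpsi
      unfold Phi
      simp only
      rw [hpsi, hvminzp]
      have := le_trans hvminz2 (le_of_lt hvallt)
      linarith [lt_of_le_of_lt hvminz2 hvallt]

end Step


section Main

open scoped Classical

variable {n : ℕ}

lemma loop (f : Fin n → Finset E → ℕ) (hf : ∀ i, IsPolymatroidRank (f i))
    (C : Fin n → E → ℕ → ℕ → ℝ) (hreg : ∀ i e, Regular (C i e)) (d : Fin n → ℕ)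
    (hd : ∀ i, d i ≤ f i univ) :
    ∀ N : ℕ, ∀ z p, Inv f C d z p → mu f C d (z, p) ≤ N → ∃ x, IsNE f C d x := by
  intro N
  induction N with
  | zero =>
      intro z p hInv hmu
      rcases step f hf C hreg d hd z p hInv with h | ⟨z', p', hInv', hlt⟩
      · exact h
      · omega
  | succ N ih =>
      intro z p hInv hmu
      rcases step f hf C hreg d hd z p hInv with h | ⟨z', p', hInv', hlt⟩
      · exact h
      · exact ih z' p' hInv' (by omega)

lemma exists_ne (f : Fin n → Finset E → ℕ) (hf : ∀ i, IsPolymatroidRank (f i))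
    (C : Fin n → E → ℕ → ℕ → ℝ) (hreg : ∀ i e, Regular (C i e)) :
    ∀ D : ℕ, ∀ d : Fin n → ℕ, (∀ i, d i ≤ f i univ) → (∑ i, d i = D) →
      ∃ z, IsNE f C d z := by
  intro D
  induction D with
  | zero =>
      intro d hd hsum
      have hz : ∀ i, d i = 0 := by
        intro i
        have := Finset.sum_eq_zero_iff.mp hsum i (mem_univ i)
        exact this
      refine ⟨fun _ _ => 0, fun i => ⟨fun U => by simp, by simp [hz i]⟩, fun i y hy => ?_⟩
      have hy0 : ∀ e, y e = 0 := by
        intro e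
        have h1 := hy.2
        rw [hz i] at h1
        exact Finset.sum_eq_zero_iff.mp h1 e (mem_univ e)
      have : y = fun _ => 0 := funext hy0
      rw [this]
  | succ D ihD =>
      intro d hd hsum
      have hp : ∃ p, 1 ≤ d p := by
        by_contra h
        push_neg at h
        have : ∑ i, d i = 0 := Finset.sum_eq_zero (fun i _ => by have := h i; omega)
        omega
      obtain ⟨p, hp⟩ := hp
      set d' := Function.update d p (d p - 1) with hd'
      have hd'le : ∀ i, d' i ≤ f i univ := by
        intro i
        by_cases hip : i = p
        · rw [hip, hd', Function.update_self]
          have := hd p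
          omega
        · rw [hd', Function.update_of_ne hip]
          exact hd i
      have hsum' : ∑ i, d' i = D := by
        have h1 : (∑ i ∈ univ.erase p, d' i) + d' p = ∑ i, d' i :=
          Finset.sum_erase_add univ d' (mem_univ p)
        have h2 : (∑ i ∈ univ.erase p, d i) + d p = ∑ i, d i :=
          Finset.sum_erase_add univ d (mem_univ p)
        have h3 : ∑ i ∈ univ.erase p, d' i = ∑ i ∈ univ.erase p, d i := by
          apply Finset.sum_congr rfl
          intro i hi
          rw [hd', Function.update_of_ne (Finset.ne_of_mem_erase hi)]
        have h4 : d' p = d p - 1 := by rw [hd', Function.update_self]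
        omega
      obtain ⟨x, hxmem, hxopt⟩ := ihD d' hd'le hsum'
      have hd'p : d' p = d p - 1 := by rw [hd', Function.update_self]
      have hd'j : ∀ j, j ≠ p → d' j = d j := fun j hj => by
        rw [hd', Function.update_of_ne hj]
      have hInv : Inv f C d x p := by
        refine ⟨hp, ?_, ?_, ?_, Or.inl ?_⟩
        · intro j hj
          have := hxmem j
          rwa [hd'j j hj] at this
        · have := hxmem p
          rwa [hd'p] at this
        · intro m hm y hy
          apply hxopt m y
          rwa [hd'j m hm]
        · intro y hy
          apply hxopt p y
          rwa [hd'p]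
      exact loop f hf C hreg d hd (mu f C d (x, p)) x p hInv le_rfl

end Main

end PG

/-- **Existence of pure Nash equilibria in polymatroid games.** For players `1,…,n`, each
with an integral polymatroid rank function `f_i`, a demand `d_i ≤ f_i(E)`, and nonnegative
regular cost functions `C_{i,e}`, there is a strategy profile `x` with
`x_i ∈ B_{f_i}(d_i)` for all `i` such that no player can decrease her private cost
`π_i(x) = Σ_e C_{i,e}(x_{i,e}; Σ_{j≠i} x_{j,e})` by unilaterally switching to another
strategy `y_i ∈ B_{f_i}(d_i)`. -/
theorem polymatroid_game_pure_nash_equilibrium {E : Type*} [Fintype E] [DecidableEq E]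
    [Nonempty E] (n : ℕ)
    (f : Fin n → Finset E → ℕ) (hf : ∀ i, IsPolymatroidRank (f i))
    (d : Fin n → ℕ) (hd : ∀ i, d i ≤ f i Finset.univ)
    (C : Fin n → E → ℕ → ℕ → ℝ)
    (hC0 : ∀ i e x t, 0 ≤ C i e x t)
    (hreg : ∀ i e, Regular (C i e)) :
    ∃ x : Fin n → (E → ℕ),
      (∀ i, x i ∈ Base (f i) (d i)) ∧
      (∀ i, ∀ y ∈ Base (f i) (d i),
        ∑ e, C i e (x i e) (∑ j ∈ Finset.univ.erase i, x j e) ≤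
          ∑ e, C i e (y e) (∑ j ∈ Finset.univ.erase i, x j e)) := by
  obtain ⟨z, hmem, hopt⟩ := PG.exists_ne f hf C hreg (∑ i, d i) d hd rfl
  exact ⟨z, hmem, fun i y hy => hopt i y hy⟩
end

section
/- (Critical elements) Let f : 2^E → ℕ be strictly positive, normalized and monotone, let S, T ⊆ E satisfy f(S) = f(T) = f(S ∩ T) = 1 and f(S ∪ T) = 2, and suppose that for every U ⊆ E there exists x ∈ B_f(2) with x(U) = f(U). Then there exist four distinct elements e₁ ∈ E∖(S ∪ T), e₂ ∈ S ∩ T, e₃ ∈ S∖T, e₄ ∈ T∖S and vectors x, y ∈ B_f(2) with x = χ_{e₁} + χ_{e₂} and y = χ_{e₃} + χ_{e₄}, such that every z ∈ B_f(2)∖{x,y} with supp(z) ⊆ {e₁,e₂,e₃,e₄} satisfies supp(z) = {e₁,e₃} or supp(z) = {e₁,e₄} or supp(z) = {e₁}. -/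
open Finset

/-- If a `ℕ`-valued sum over a finset equals `1`, there is a unique element with value `1`. -/
lemma sum_one_aux {E : Type*} [DecidableEq E] {A : Finset E} {x : E → ℕ}
    (h : ∑ e ∈ A, x e = 1) : ∃ a ∈ A, x a = 1 ∧ ∀ b ∈ A, b ≠ a → x b = 0 := by
  obtain ⟨a, ha, hxa⟩ := Finset.exists_ne_zero_of_sum_ne_zero (s := A) (f := x)
    (by omega)
  have hsplit := Finset.add_sum_erase A x ha
  have hz : ∑ e ∈ A.erase a, x e = 0 := by omega
  refine ⟨a, ha, by omega, fun b hb hba => ?_⟩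
  exact (Finset.sum_eq_zero_iff.mp hz) b (Finset.mem_erase.mpr ⟨hba, hb⟩)

/-- **Critical elements.** Let `f : 2^E → ℕ` be strictly positive, normalized and monotone,
and `S, T ⊆ E` with `f(S) = f(T) = f(S ∩ T) = 1` and `f(S ∪ T) = 2`, such that every
constraint of `f` is tight for some point of `B_f(2)`. Then there are four distinct elements
`e₁ ∈ E∖(S∪T)`, `e₂ ∈ S∩T`, `e₃ ∈ S∖T`, `e₄ ∈ T∖S` and `x = χ_{e₁} + χ_{e₂}`,
`y = χ_{e₃} + χ_{e₄}` in `B_f(2)`, such that every `z ∈ B_f(2)∖{x,y}` with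
`supp(z) ⊆ {e₁,e₂,e₃,e₄}` has `supp(z) = {e₁,e₃}` or `supp(z) = {e₁,e₄}` or `supp(z) = {e₁}`. -/
theorem critical_elements {E : Type*} [Fintype E] [DecidableEq E] [Nonempty E]
    (f : Finset E → ℕ)
    (hpos : ∀ U : Finset E, U.Nonempty → 0 < f U)
    (hnorm : f ∅ = 0)
    (hmono : ∀ U V : Finset E, U ⊆ V → f U ≤ f V)
    (S T : Finset E)
    (hS : f S = 1) (hT : f T = 1) (hST : f (S ∩ T) = 1) (hSuT : f (S ∪ T) = 2)
    (htight : ∀ U : Finset E, ∃ x ∈ Base f 2, ∑ e ∈ U, x e = f U) :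
    ∃ e₁ e₂ e₃ e₄ : E,
      e₁ ≠ e₂ ∧ e₁ ≠ e₃ ∧ e₁ ≠ e₄ ∧ e₂ ≠ e₃ ∧ e₂ ≠ e₄ ∧ e₃ ≠ e₄ ∧
      e₁ ∉ S ∪ T ∧ e₂ ∈ S ∩ T ∧ e₃ ∈ S \ T ∧ e₄ ∈ T \ S ∧
      chi e₁ + chi e₂ ∈ Base f 2 ∧ chi e₃ + chi e₄ ∈ Base f 2 ∧
      (∀ z ∈ Base f 2, z ≠ chi e₁ + chi e₂ → z ≠ chi e₃ + chi e₄ →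
        Finset.univ.filter (fun e => 1 ≤ z e) ⊆ {e₁, e₂, e₃, e₄} →
        (Finset.univ.filter (fun e => 1 ≤ z e) = {e₁, e₃} ∨
         Finset.univ.filter (fun e => 1 ≤ z e) = {e₁, e₄} ∨
         Finset.univ.filter (fun e => 1 ≤ z e) = {e₁})) := by
  -- ### Construct x = χ e₁ + χ e₂ from tightness at S ∩ T
  obtain ⟨x, hxB, hx1⟩ := htight (S ∩ T)
  rw [hST] at hx1
  have hxS : ∑ e ∈ S, x e ≤ 1 := hS ▸ hxB.1 S
  have hxT : ∑ e ∈ T, x e ≤ 1 := hT ▸ hxB.1 T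
  have hxE : ∑ e, x e = 2 := hxB.2
  have hui : ∑ e ∈ S ∪ T, x e + ∑ e ∈ S ∩ T, x e = ∑ e ∈ S, x e + ∑ e ∈ T, x e :=
    Finset.sum_union_inter
  have hle : ∑ e ∈ S ∩ T, x e ≤ ∑ e ∈ S ∪ T, x e :=
    Finset.sum_le_sum_of_subset Finset.inter_subset_union
  have hxU : ∑ e ∈ S ∪ T, x e = 1 := by omega
  have hxcompl : ∑ e ∈ (S ∪ T)ᶜ, x e = 1 := by
    have := Finset.sum_add_sum_compl (S ∪ T) x
    omega
  have hxmid : ∑ e ∈ (S ∪ T) \ (S ∩ T), x e = 0 := by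
    have := Finset.sum_sdiff (f := x) (Finset.inter_subset_union (s := S) (t := T))
    omega
  have hxmid0 : ∀ b ∈ (S ∪ T) \ (S ∩ T), x b = 0 := Finset.sum_eq_zero_iff.mp hxmid
  obtain ⟨e₂, he₂, hxe₂, hx0i⟩ := sum_one_aux hx1
  obtain ⟨e₁, he₁c, hxe₁, hx0c⟩ := sum_one_aux hxcompl
  have he₁ : e₁ ∉ S ∪ T := Finset.mem_compl.mp he₁c
  have he₂u : e₂ ∈ S ∪ T := Finset.mem_union_left T (Finset.mem_inter.mp he₂).1
  have hx_eq : x = chi e₁ + chi e₂ := by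
    funext e
    simp only [Pi.add_apply, chi]
    split_ifs with h1 h2 h2
    · subst h1; exact absurd h2 (fun h => he₁ (h ▸ he₂u))
    · subst h1; exact hxe₁
    · subst h2; exact hxe₂
    · by_cases hi : e ∈ S ∩ T
      · exact hx0i e hi h2
      · by_cases hu : e ∈ S ∪ T
        · exact hxmid0 e (Finset.mem_sdiff.mpr ⟨hu, hi⟩)
        · exact hx0c e (Finset.mem_compl.mpr hu) h1
  -- ### Construct y = χ e₃ + χ e₄ from tightness at S ∪ T
  obtain ⟨y, hyB, hy2⟩ := htight (S ∪ T)
  rw [hSuT] at hy2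
  have hyS : ∑ e ∈ S, y e ≤ 1 := hS ▸ hyB.1 S
  have hyT : ∑ e ∈ T, y e ≤ 1 := hT ▸ hyB.1 T
  have hyE : ∑ e, y e = 2 := hyB.2
  have hSdiff : S \ (S ∩ T) = S \ T := by
    ext a; simp only [Finset.mem_sdiff, Finset.mem_inter]; tauto
  have hTdiff : T \ (S ∩ T) = T \ S := by
    ext a; simp only [Finset.mem_sdiff, Finset.mem_inter]; tauto
  have hUdiff : (S ∪ T) \ S = T \ S := by
    ext a; simp only [Finset.mem_sdiff, Finset.mem_union]; tauto
  have hdS : ∑ e ∈ S \ T, y e + ∑ e ∈ S ∩ T, y e = ∑ e ∈ S, y e := by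
    have := Finset.sum_sdiff (f := y) (s₁ := S ∩ T) (s₂ := S) Finset.inter_subset_left
    rwa [hSdiff] at this
  have hdT : ∑ e ∈ T \ S, y e + ∑ e ∈ S ∩ T, y e = ∑ e ∈ T, y e := by
    have := Finset.sum_sdiff (f := y) (s₁ := S ∩ T) (s₂ := T) Finset.inter_subset_right
    rwa [hTdiff] at this
  have hdU : ∑ e ∈ T \ S, y e + ∑ e ∈ S, y e = ∑ e ∈ S ∪ T, y e := by
    have := Finset.sum_sdiff (f := y) (s₁ := S) (s₂ := S ∪ T) Finset.subset_union_left
    rwa [hUdiff] at this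
  have ha1 : ∑ e ∈ S \ T, y e = 1 := by omega
  have hb1 : ∑ e ∈ T \ S, y e = 1 := by omega
  have hc0 : ∑ e ∈ S ∩ T, y e = 0 := by omega
  have hycompl : ∑ e ∈ (S ∪ T)ᶜ, y e = 0 := by
    have := Finset.sum_add_sum_compl (S ∪ T) y
    omega
  have hc00 : ∀ b ∈ S ∩ T, y b = 0 := Finset.sum_eq_zero_iff.mp hc0
  have hycompl0 : ∀ b ∈ (S ∪ T)ᶜ, y b = 0 := Finset.sum_eq_zero_iff.mp hycompl
  obtain ⟨e₃, he₃, hye₃, hy0a⟩ := sum_one_aux ha1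
  obtain ⟨e₄, he₄, hye₄, hy0b⟩ := sum_one_aux hb1
  have he₃S : e₃ ∈ S := (Finset.mem_sdiff.mp he₃).1
  have he₃T : e₃ ∉ T := (Finset.mem_sdiff.mp he₃).2
  have he₄T : e₄ ∈ T := (Finset.mem_sdiff.mp he₄).1
  have he₄S : e₄ ∉ S := (Finset.mem_sdiff.mp he₄).2
  have he₂S : e₂ ∈ S := (Finset.mem_inter.mp he₂).1
  have he₂T : e₂ ∈ T := (Finset.mem_inter.mp he₂).2
  have h12 : e₁ ≠ e₂ := fun h => he₁ (h ▸ he₂u)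
  have h13 : e₁ ≠ e₃ := fun h => he₁ (h ▸ Finset.mem_union_left T he₃S)
  have h14 : e₁ ≠ e₄ := fun h => he₁ (h ▸ Finset.mem_union_right S he₄T)
  have h23 : e₂ ≠ e₃ := fun h => he₃T (h ▸ he₂T)
  have h24 : e₂ ≠ e₄ := fun h => he₄S (h ▸ he₂S)
  have h34 : e₃ ≠ e₄ := fun h => he₄S (h ▸ he₃S)
  have hy_eq : y = chi e₃ + chi e₄ := by
    funext e
    simp only [Pi.add_apply, chi]
    split_ifs with h1 h2 h2
    · subst h1; exact absurd h2 h34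
    · subst h1; exact hye₃
    · subst h2; exact hye₄
    · by_cases hsa : e ∈ S \ T
      · exact hy0a e hsa h1
      · by_cases hsb : e ∈ T \ S
        · exact hy0b e hsb h2
        · by_cases hi : e ∈ S ∩ T
          · exact hc00 e hi
          · refine hycompl0 e (Finset.mem_compl.mpr ?_)
            simp only [Finset.mem_sdiff, Finset.mem_inter] at hsa hsb hi
            simp only [Finset.mem_union]
            tauto
  refine ⟨e₁, e₂, e₃, e₄, h12, h13, h14, h23, h24, h34, he₁, he₂, he₃, he₄,
    hx_eq ▸ hxB, hy_eq ▸ hyB, ?_⟩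
  intro z hzB hzx hzy hsupp
  have hz0 : ∀ e, e ≠ e₁ → e ≠ e₂ → e ≠ e₃ → e ≠ e₄ → z e = 0 := by
    intro e k1 k2 k3 k4
    by_contra hne
    have hmem : e ∈ Finset.univ.filter (fun e => 1 ≤ z e) :=
      Finset.mem_filter.mpr ⟨Finset.mem_univ e, by omega⟩
    have := hsupp hmem
    simp only [Finset.mem_insert, Finset.mem_singleton] at this
    tauto
  have hne1 : e₁ ∉ ({e₂, e₃, e₄} : Finset E) := by simp [h12, h13, h14]
  have hne2 : e₂ ∉ ({e₃, e₄} : Finset E) := by simp [h23, h24]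
  have hne3 : e₃ ∉ ({e₄} : Finset E) := by simp [h34]
  have hsum4 : z e₁ + z e₂ + z e₃ + z e₄ = 2 := by
    have heq : ∑ e ∈ ({e₁, e₂, e₃, e₄} : Finset E), z e = ∑ e, z e := by
      refine Finset.sum_subset (Finset.subset_univ _) (fun e _ he => ?_)
      simp only [Finset.mem_insert, Finset.mem_singleton] at he
      push_neg at he
      exact hz0 e he.1 he.2.1 he.2.2.1 he.2.2.2
    rw [Finset.sum_insert hne1, Finset.sum_insert hne2, Finset.sum_insert hne3,
      Finset.sum_singleton, hzB.2] at heq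
    omega
  have hzS : z e₂ + z e₃ ≤ 1 := by
    have heq : ∑ e ∈ ({e₂, e₃} : Finset E), z e = ∑ e ∈ S, z e := by
      refine Finset.sum_subset ?_ (fun e heS he => ?_)
      · intro a ha
        simp only [Finset.mem_insert, Finset.mem_singleton] at ha
        rcases ha with rfl | rfl
        · exact he₂S
        · exact he₃S
      · simp only [Finset.mem_insert, Finset.mem_singleton] at he
        push_neg at he
        refine hz0 e (fun h => he₁ (h ▸ Finset.mem_union_left T heS)) he.1 he.2
          (fun h => he₄S (h ▸ heS))
    rw [Finset.sum_insert (by simp [h23]), Finset.sum_singleton] at heq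
    rw [heq]
    exact hS ▸ hzB.1 S
  have hzT : z e₂ + z e₄ ≤ 1 := by
    have heq : ∑ e ∈ ({e₂, e₄} : Finset E), z e = ∑ e ∈ T, z e := by
      refine Finset.sum_subset ?_ (fun e heT he => ?_)
      · intro a ha
        simp only [Finset.mem_insert, Finset.mem_singleton] at ha
        rcases ha with rfl | rfl
        · exact he₂T
        · exact he₄T
      · simp only [Finset.mem_insert, Finset.mem_singleton] at he
        push_neg at he
        refine hz0 e (fun h => he₁ (h ▸ Finset.mem_union_right S heT)) he.1
          (fun h => he₃T (h ▸ heT)) he.2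
    rw [Finset.sum_insert (by simp [h24]), Finset.sum_singleton] at heq
    rw [heq]
    exact hT ▸ hzB.1 T
  have hx_ne : ¬(z e₁ = 1 ∧ z e₂ = 1 ∧ z e₃ = 0 ∧ z e₄ = 0) := by
    rintro ⟨k1, k2, k3, k4⟩
    apply hzx
    funext e
    simp only [Pi.add_apply, chi]
    split_ifs with a1 a2 a2
    · subst a1; exact absurd a2 h12
    · subst a1; exact k1
    · subst a2; exact k2
    · by_cases a3 : e = e₃
      · subst a3; exact k3
      · by_cases a4 : e = e₄
        · subst a4; exact k4
        · exact hz0 e a1 a2 a3 a4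
  have hy_ne : ¬(z e₁ = 0 ∧ z e₂ = 0 ∧ z e₃ = 1 ∧ z e₄ = 1) := by
    rintro ⟨k1, k2, k3, k4⟩
    apply hzy
    funext e
    simp only [Pi.add_apply, chi]
    split_ifs with a1 a2 a2
    · subst a1; exact absurd a2 h34
    · subst a1; exact k3
    · subst a2; exact k4
    · by_cases a3 : e = e₁
      · subst a3; exact k1
      · by_cases a4 : e = e₂
        · subst a4; exact k2
        · exact hz0 e a3 a4 a1 a2
  have hcase : (z e₁ = 1 ∧ z e₂ = 0 ∧ z e₃ = 1 ∧ z e₄ = 0) ∨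
      (z e₁ = 1 ∧ z e₂ = 0 ∧ z e₃ = 0 ∧ z e₄ = 1) ∨
      (z e₁ = 2 ∧ z e₂ = 0 ∧ z e₃ = 0 ∧ z e₄ = 0) := by omega
  rcases hcase with ⟨k1, k2, k3, k4⟩ | ⟨k1, k2, k3, k4⟩ | ⟨k1, k2, k3, k4⟩
  · left
    ext e
    simp only [Finset.mem_filter, Finset.mem_univ, true_and, Finset.mem_insert,
      Finset.mem_singleton]
    constructor
    · intro h
      have hmem := hsupp (Finset.mem_filter.mpr ⟨Finset.mem_univ e, h⟩)
      simp only [Finset.mem_insert, Finset.mem_singleton] at hmem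
      rcases hmem with rfl | rfl | rfl | rfl
      · exact Or.inl rfl
      · omega
      · exact Or.inr rfl
      · omega
    · rintro (rfl | rfl) <;> omega
  · right; left
    ext e
    simp only [Finset.mem_filter, Finset.mem_univ, true_and, Finset.mem_insert,
      Finset.mem_singleton]
    constructor
    · intro h
      have hmem := hsupp (Finset.mem_filter.mpr ⟨Finset.mem_univ e, h⟩)
      simp only [Finset.mem_insert, Finset.mem_singleton] at hmem
      rcases hmem with rfl | rfl | rfl | rfl
      · exact Or.inl rfl
      · omega
      · omega
      · exact Or.inr rfl
    · rintro (rfl | rfl) <;> omega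
  · right; right
    ext e
    simp only [Finset.mem_filter, Finset.mem_univ, true_and, Finset.mem_singleton]
    constructor
    · intro h
      have hmem := hsupp (Finset.mem_filter.mpr ⟨Finset.mem_univ e, h⟩)
      simp only [Finset.mem_insert, Finset.mem_singleton] at hmem
      rcases hmem with rfl | rfl | rfl | rfl
      · rfl
      · omega
      · omega
      · omega
    · rintro rfl; omega
end
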